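/- arXiv:2307.04839 — 6 statements merged into one kernel-verified Lean document; each statement's English description precedes it below -/
import Mathlib

section
/- For every positive integer n and every subset T of [n-1], the polynomial A^T_n(x) = Σ_{w ∈ S_n : Des(w) ⊆ T} x^{des(w)} has only real roots. -/
open Polynomial

open scoped Classical

noncomputable section

/-- The descent set of a permutation `w` of `Fin n`, recorded as a subset of
`{1, ..., n-1}` (1-based positions, as in the paper: `i ∈ Des(w)` iff `w(i) > w(i+1)`). -/
def descSet {n : ℕ} (w : Equiv.Perm (Fin n)) : Finset ℕ :=
  (Finset.univ.filter (fun i : Fin (n - 1) =>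
      w ⟨i.val + 1, by have := i.isLt; omega⟩ < w ⟨i.val, by have := i.isLt; omega⟩)).image
    (fun i => i.val + 1)

/-- `A^T_n(x) = Σ_{w ∈ S_n, Des(w) ⊆ T} x^{des(w)}` (note `Des(w) ⊆ {1,...,n-1}`
automatically, so this also realizes the convention `A^T_n := A^{T ∩ [n-1]}_n`). -/
def Apoly (n : ℕ) (T : Finset ℕ) : Polynomial ℝ :=
  ∑ w ∈ Finset.univ.filter (fun w : Equiv.Perm (Fin n) => descSet w ⊆ T),
    X ^ (descSet w).card

/-- `p^T_{n,k}(x) = Σ x^{des(w)}` over permutations `w ∈ S_{n+1}` with `w(1) = k+1`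
(0-based: `w 0 = k`) and `Des(w) ⊆ T`. -/
def ppoly (n k : ℕ) (T : Finset ℕ) : Polynomial ℝ :=
  ∑ w ∈ Finset.univ.filter (fun w : Equiv.Perm (Fin (n + 1)) =>
      (w 0 : ℕ) = k ∧ descSet w ⊆ T),
    X ^ (descSet w).card

/-- A real polynomial has only real roots (or is identically zero). -/
def RealRooted (p : Polynomial ℝ) : Prop :=
  p = 0 ∨ ∀ z : ℂ, Polynomial.aeval z p = 0 → z.im = 0

/-- The list of real roots of `p`, with multiplicity, in decreasing order. -/
def rootsDesc (p : Polynomial ℝ) : List ℝ :=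
  (p.roots.sort (· ≤ ·)).reverse

/-- `Interlaces p q` means `p ⪯ q`: both are real-rooted and, listing the roots of `p`
as `α_1 ≥ α_2 ≥ ⋯` and those of `q` as `β_1 ≥ β_2 ≥ ⋯`, one has
`⋯ ≤ α_2 ≤ β_2 ≤ α_1 ≤ β_1`; by convention the zero polynomial interlaces and is
interlaced by every real-rooted polynomial. -/
def Interlaces (p q : Polynomial ℝ) : Prop :=
  (p = 0 ∧ RealRooted q) ∨ (q = 0 ∧ RealRooted p) ∨
  (RealRooted p ∧ RealRooted q ∧
    Multiset.card q.roots ≤ Multiset.card p.roots + 1 ∧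
    Multiset.card p.roots ≤ Multiset.card q.roots ∧
    (∀ (i : ℕ) (hp : i < (rootsDesc p).length) (hq : i < (rootsDesc q).length),
      (rootsDesc p).get ⟨i, hp⟩ ≤ (rootsDesc q).get ⟨i, hq⟩) ∧
    (∀ (i : ℕ) (hq : i + 1 < (rootsDesc q).length) (hp : i < (rootsDesc p).length),
      (rootsDesc q).get ⟨i + 1, hq⟩ ≤ (rootsDesc p).get ⟨i, hp⟩))


section Aux

open Complex

open scoped ComplexConjugate

def Jz (z u v : ℂ) : Prop := 0 ≤ (v * conj u).im ∧ 0 ≤ (z * (u * conj v)).im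

lemma Jz_zero_left {z v : ℂ} : Jz z 0 v := by simp [Jz]

lemma Jz_zero_right {z u : ℂ} : Jz z u 0 := by simp [Jz]

lemma Jz_self {z u : ℂ} (hz : 0 ≤ z.im) : Jz z u u := by
  constructor
  · rw [Complex.mul_conj]; simp
  · rw [Complex.mul_conj, Complex.mul_im]
    simp only [Complex.ofReal_re, Complex.ofReal_im, mul_zero, zero_add]
    exact mul_nonneg hz (Complex.normSq_nonneg _)

lemma Jz_add_left {z u v w : ℂ} (h1 : Jz z u w) (h2 : Jz z v w) : Jz z (u + v) w := by
  constructor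
  · have e : w * conj (u + v) = w * conj u + w * conj v := by rw [map_add]; ring
    rw [e, Complex.add_im]; exact add_nonneg h1.1 h2.1
  · have e : z * ((u + v) * conj w) = z * (u * conj w) + z * (v * conj w) := by ring
    rw [e, Complex.add_im]; exact add_nonneg h1.2 h2.2

lemma Jz_add_right {z u v v' : ℂ} (h1 : Jz z u v) (h2 : Jz z u v') : Jz z u (v + v') := by
  constructor
  · have e : (v + v') * conj u = v * conj u + v' * conj u := by ring
    rw [e, Complex.add_im]; exact add_nonneg h1.1 h2.1
  · have e : z * (u * conj (v + v')) = z * (u * conj v) + z * (u * conj v') := by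
      rw [map_add]; ring
    rw [e, Complex.add_im]; exact add_nonneg h1.2 h2.2

lemma Jz_sum_left {z w : ℂ} {ι : Type*} {s : Finset ι} {v : ι → ℂ}
    (h : ∀ i ∈ s, Jz z (v i) w) : Jz z (∑ i ∈ s, v i) w := by
  induction s using Finset.cons_induction with
  | empty => simpa using Jz_zero_left
  | cons a s ha ih =>
    rw [Finset.sum_cons]
    exact Jz_add_left (h a (Finset.mem_cons_self a s))
      (ih fun i hi => h i (Finset.mem_cons.2 (Or.inr hi)))

lemma Jz_sum_right {z u : ℂ} {ι : Type*} {s : Finset ι} {v : ι → ℂ}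
    (h : ∀ i ∈ s, Jz z u (v i)) : Jz z u (∑ i ∈ s, v i) := by
  induction s using Finset.cons_induction with
  | empty => simpa using Jz_zero_right
  | cons a s ha ih =>
    rw [Finset.sum_cons]
    exact Jz_add_right (h a (Finset.mem_cons_self a s))
      (ih fun i hi => h i (Finset.mem_cons.2 (Or.inr hi)))

lemma Jz_rot {z ζ u v : ℂ} (hζ : ζ = z ∨ ζ = 0) (h : Jz z u v) : Jz z v (ζ * u) := by
  rcases hζ with rfl | rfl
  · constructor
    · have e : ζ * u * conj v = ζ * (u * conj v) := by ring
      rw [e]; exact h.2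
    · have e : ζ * (v * conj (ζ * u)) = (ζ * conj ζ) * (v * conj u) := by
        rw [map_mul]; ring
      rw [e, Complex.mul_conj, Complex.mul_im]
      simp only [Complex.ofReal_re, Complex.ofReal_im, zero_mul, add_zero]
      exact mul_nonneg (Complex.normSq_nonneg _) h.1
  · simpa using Jz_zero_right

lemma Jz_smul {z ζ u v : ℂ} (hζ : ζ = z ∨ ζ = 0) (h : Jz z u v) : Jz z (ζ * u) (ζ * v) := by
  rcases hζ with rfl | rfl
  · constructor
    · have e : ζ * v * conj (ζ * u) = (ζ * conj ζ) * (v * conj u) := by rw [map_mul]; ring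
      rw [e, Complex.mul_conj, Complex.mul_im]
      simp only [Complex.ofReal_re, Complex.ofReal_im, zero_mul, add_zero]
      exact mul_nonneg (Complex.normSq_nonneg _) h.1
    · have e : ζ * (ζ * u * conj (ζ * v)) = (ζ * conj ζ) * (ζ * (u * conj v)) := by
        rw [map_mul]; ring
      rw [e, Complex.mul_conj, Complex.mul_im]
      simp only [Complex.ofReal_re, Complex.ofReal_im, zero_mul, add_zero]
      exact mul_nonneg (Complex.normSq_nonneg _) h.2
  · rw [zero_mul, zero_mul]; exact Jz_zero_left

lemma sum_vanish {z : ℂ} (hz : 0 < z.im) (v : ℕ → ℂ) :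
    ∀ d a, (∀ i j, a ≤ i → i ≤ j → j < a + d → Jz z (v i) (v j)) →
    (∑ j ∈ Finset.Ico a (a + d), v j) = 0 → ∀ j, a ≤ j → j < a + d → v j = 0 := by
  intro d
  induction d with
  | zero => intro a _ _ j h1 h2; omega
  | succ d ih =>
    intro a hJ hsum j hja hjb
    by_cases hva : v a = 0
    · rw [Finset.sum_eq_sum_Ico_succ_bot (by omega), hva, zero_add] at hsum
      rcases Nat.eq_or_lt_of_le hja with rfl | hja'
      · exact hva
      · have := ih (a + 1) (fun i j h1 h2 h3 => hJ i j (by omega) h2 (by omega))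
          (by rw [show a + 1 + d = a + (d + 1) by omega]; exact hsum)
        exact this j (by omega) (by omega)
    · exfalso
      have hmem : ∀ i, a ≤ i → i < a + (d+1) → i ∈ Finset.Ico a (a + (d+1)) := by
        intro i h1 h2; simp [Finset.mem_Ico]; omega
      have h1 : ∀ i ∈ Finset.Ico a (a + (d+1)), 0 ≤ (v i * conj (v a)).im := by
        intro i hi
        rw [Finset.mem_Ico] at hi
        exact (hJ a i le_rfl hi.1 hi.2).1
      have hsum_im : ∑ i ∈ Finset.Ico a (a + (d+1)), (v i * conj (v a)).im = 0 := by
        have : ∑ i ∈ Finset.Ico a (a + (d+1)), v i * conj (v a)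
            = (∑ i ∈ Finset.Ico a (a + (d+1)), v i) * conj (v a) := by
          rw [Finset.sum_mul]
        calc ∑ i ∈ Finset.Ico a (a + (d+1)), (v i * conj (v a)).im
            = (∑ i ∈ Finset.Ico a (a + (d+1)), v i * conj (v a)).im := by
              rw [Complex.im_sum]
          _ = 0 := by rw [this, hsum]; simp
      have him0 : ∀ i ∈ Finset.Ico a (a + (d+1)), (v i * conj (v a)).im = 0 :=
        fun i hi => (Finset.sum_eq_zero_iff_of_nonneg h1).1 hsum_im i hi
      have hre : ∀ i ∈ Finset.Ico a (a + (d+1)), 0 ≤ (v i * conj (v a)).re := by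
        intro i hi
        rw [Finset.mem_Ico] at hi
        have h2 : 0 ≤ (z * (v a * conj (v i))).im := (hJ a i le_rfl hi.1 hi.2).2
        have him := him0 i (hmem i hi.1 hi.2)
        have e : v a * conj (v i) = conj (v i * conj (v a)) := by
          rw [map_mul, Complex.conj_conj]; ring
        rw [e, Complex.mul_im, Complex.conj_im, Complex.conj_re, him] at h2
        simp only [neg_zero, mul_zero, zero_add] at h2
        nlinarith
      have hre_sum : ∑ i ∈ Finset.Ico a (a + (d+1)), (v i * conj (v a)).re = 0 := by
        have : ∑ i ∈ Finset.Ico a (a + (d+1)), v i * conj (v a)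
            = (∑ i ∈ Finset.Ico a (a + (d+1)), v i) * conj (v a) := by
          rw [Finset.sum_mul]
        calc ∑ i ∈ Finset.Ico a (a + (d+1)), (v i * conj (v a)).re
            = (∑ i ∈ Finset.Ico a (a + (d+1)), v i * conj (v a)).re := by
              rw [Complex.re_sum]
          _ = 0 := by rw [this, hsum]; simp
      have ha0 : (v a * conj (v a)).re = 0 :=
        (Finset.sum_eq_zero_iff_of_nonneg hre).1 hre_sum a (hmem a le_rfl (by omega))
      rw [Complex.mul_conj] at ha0
      simp only [Complex.ofReal_re] at ha0
      exact hva (by simpa using (Complex.normSq_eq_zero.1 ha0))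

def GF (f : ℕ → ℝ[X]) (m : ℕ) : Prop :=
  (∀ j, j < m → ∀ z : ℂ, 0 < z.im → f j ≠ 0 → aeval z (f j) ≠ 0) ∧
  (∀ i j, i ≤ j → j < m → ∀ z : ℂ, 0 < z.im → Jz z (aeval z (f i)) (aeval z (f j)))

lemma engine {f g : ℕ → ℝ[X]} {m : ℕ} {c : ℝ[X]} (hc : c = X ∨ c = 0)
    (hg : ∀ k, k ≤ m → g k = c * (∑ j ∈ Finset.range k, f j) + ∑ j ∈ Finset.Ico k m, f j)
    (hf : GF f m) : GF g (m + 1) := by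
  have hval : ∀ z : ℂ, ∀ k, k ≤ m → aeval z (g k)
      = aeval z c * (∑ j ∈ Finset.range k, aeval z (f j))
        + ∑ j ∈ Finset.Ico k m, aeval z (f j) := by
    intro z k hk
    rw [hg k hk]
    simp [map_add, map_mul, map_sum]
  have hζ : ∀ z : ℂ, 0 < z.im → aeval z c = z ∨ aeval z c = 0 := by
    rcases hc with rfl | rfl <;> intro z _ <;> simp
  constructor
  · -- nonvanishing
    intro k hk z hz hgk h0
    rw [Nat.lt_succ_iff] at hk
    rw [hval z k hk] at h0
    have hpair : ∀ a b, a ≤ b → b < m → Jz z (aeval z (f a)) (aeval z (f b)) :=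
      fun a b h1 h2 => hf.2 a b h1 h2 z hz
    have hJSR : Jz z (∑ j ∈ Finset.range k, aeval z (f j))
        (∑ j ∈ Finset.Ico k m, aeval z (f j)) := by
      apply Jz_sum_left; intro a ha; apply Jz_sum_right; intro b hb
      rw [Finset.mem_range] at ha; rw [Finset.mem_Ico] at hb
      exact hpair a b (by omega) hb.2
    have hvanR : (∑ j ∈ Finset.Ico k m, aeval z (f j)) = 0 → ∀ j, k ≤ j → j < m →
        aeval z (f j) = 0 := by
      intro hR0 j h1 h2
      have := sum_vanish hz (fun j => aeval z (f j)) (m - k) k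
        (fun a b ha hb hbm => hpair a b hb (by omega))
        (by rw [Nat.add_sub_cancel' hk]; exact hR0)
      exact this j h1 (by omega)
    rcases hc with rfl | rfl
    · -- c = X
      have hX : aeval z (X : ℝ[X]) = z := by simp
      rw [hX] at h0
      -- deduce S = 0 and R = 0
      have h2 : (z * ((∑ j ∈ Finset.range k, aeval z (f j)) *
            conj (∑ j ∈ Finset.range k, aeval z (f j))) +
          (∑ j ∈ Finset.Ico k m, aeval z (f j)) *
            conj (∑ j ∈ Finset.range k, aeval z (f j))).im = 0 := by
        have e : z * ((∑ j ∈ Finset.range k, aeval z (f j)) *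
              conj (∑ j ∈ Finset.range k, aeval z (f j))) +
            (∑ j ∈ Finset.Ico k m, aeval z (f j)) *
              conj (∑ j ∈ Finset.range k, aeval z (f j))
            = (z * (∑ j ∈ Finset.range k, aeval z (f j)) +
               ∑ j ∈ Finset.Ico k m, aeval z (f j)) *
              conj (∑ j ∈ Finset.range k, aeval z (f j)) := by ring
        rw [e, h0, zero_mul, Complex.zero_im]
      rw [Complex.mul_conj, Complex.add_im, Complex.mul_im] at h2
      simp only [Complex.ofReal_re, Complex.ofReal_im, mul_zero, zero_add] at h2
      have hS0 : (∑ j ∈ Finset.range k, aeval z (f j)) = 0 := by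
        have hge := hJSR.1
        have hn : Complex.normSq (∑ j ∈ Finset.range k, aeval z (f j)) = 0 := by
          nlinarith [Complex.normSq_nonneg (∑ j ∈ Finset.range k, aeval z (f j))]
        exact Complex.normSq_eq_zero.1 hn
      have hR0 : (∑ j ∈ Finset.Ico k m, aeval z (f j)) = 0 := by
        rw [hS0, mul_zero, zero_add] at h0; exact h0
      have hvanS : ∀ j, j < k → aeval z (f j) = 0 := by
        intro j hj
        have := sum_vanish hz (fun j => aeval z (f j)) k 0
          (fun a b ha hb hbm => hpair a b hb (by omega))
          (by rw [zero_add, ← Finset.range_eq_Ico]; exact hS0)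
        exact this j (by omega) (by omega)
      have hallz : ∀ j, j < m → f j = 0 := by
        intro j hj
        by_contra hne
        rcases lt_or_ge j k with hjk | hjk
        · exact hf.1 j hj z hz hne (hvanS j hjk)
        · exact hf.1 j hj z hz hne (hvanR hR0 j hjk hj)
      apply hgk
      rw [hg k hk, Finset.sum_eq_zero (fun j hj => hallz j (by
            rw [Finset.mem_range] at hj; omega)),
        Finset.sum_eq_zero (fun j hj => hallz j (by
            rw [Finset.mem_Ico] at hj; exact hj.2))]
      simp
    · -- c = 0
      have hX : aeval z (0 : ℝ[X]) = 0 := by simp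
      rw [hX, zero_mul, zero_add] at h0
      apply hgk
      rw [hg k hk, zero_mul, zero_add, Finset.sum_eq_zero (fun j hj => by
          by_contra hne
          rw [Finset.mem_Ico] at hj
          exact hf.1 j hj.2 z hz hne (hvanR h0 j hj.1 hj.2))]
  · -- pairwise
    intro i j hij hj z hz
    rw [Nat.lt_succ_iff] at hj
    have hik : i ≤ m := le_trans hij hj
    rw [hval z i hik, hval z j hj]
    have hζ' := hζ z hz
    have hpair : ∀ a b, a ≤ b → b < m → Jz z (aeval z (f a)) (aeval z (f b)) :=
      fun a b h1 h2 => hf.2 a b h1 h2 z hz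
    have hSM : Jz z (∑ a ∈ Finset.range i, aeval z (f a))
        (∑ a ∈ Finset.Ico i j, aeval z (f a)) := by
      apply Jz_sum_left; intro a ha; apply Jz_sum_right; intro b hb
      rw [Finset.mem_range] at ha; rw [Finset.mem_Ico] at hb
      exact hpair a b (by omega) (by omega)
    have hMR : Jz z (∑ a ∈ Finset.Ico i j, aeval z (f a))
        (∑ a ∈ Finset.Ico j m, aeval z (f a)) := by
      apply Jz_sum_left; intro a ha; apply Jz_sum_right; intro b hb
      rw [Finset.mem_Ico] at ha; rw [Finset.mem_Ico] at hb
      exact hpair a b (by omega) (by omega)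
    have hAA : Jz z (aeval z c * (∑ a ∈ Finset.range i, aeval z (f a)) +
        ∑ a ∈ Finset.Ico j m, aeval z (f a)) (aeval z c * (∑ a ∈ Finset.range i, aeval z (f a)) +
        ∑ a ∈ Finset.Ico j m, aeval z (f a)) := Jz_self hz.le
    have hMM : Jz z (∑ a ∈ Finset.Ico i j, aeval z (f a))
        (∑ a ∈ Finset.Ico i j, aeval z (f a)) := Jz_self hz.le
    have hMA : Jz z (∑ a ∈ Finset.Ico i j, aeval z (f a))
        (aeval z c * (∑ a ∈ Finset.range i, aeval z (f a)) +
          ∑ a ∈ Finset.Ico j m, aeval z (f a)) :=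
      Jz_add_right (Jz_rot hζ' hSM) hMR
    have hAzM : Jz z (aeval z c * (∑ a ∈ Finset.range i, aeval z (f a)) +
          ∑ a ∈ Finset.Ico j m, aeval z (f a))
        (aeval z c * (∑ a ∈ Finset.Ico i j, aeval z (f a))) :=
      Jz_add_left (Jz_smul hζ' hSM) (Jz_rot hζ' hMR)
    have hMzM : Jz z (∑ a ∈ Finset.Ico i j, aeval z (f a))
        (aeval z c * (∑ a ∈ Finset.Ico i j, aeval z (f a))) := Jz_rot hζ' hMM
    have main := Jz_add_left (Jz_add_right hAA hAzM) (Jz_add_right hMA hMzM)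
    have e1 : aeval z c * (∑ a ∈ Finset.range i, aeval z (f a)) +
          ∑ a ∈ Finset.Ico i m, aeval z (f a)
        = (aeval z c * (∑ a ∈ Finset.range i, aeval z (f a)) +
            ∑ a ∈ Finset.Ico j m, aeval z (f a)) + ∑ a ∈ Finset.Ico i j, aeval z (f a) := by
      rw [← Finset.sum_Ico_consecutive (fun a => aeval z (f a)) hij hj]
      ring
    have e2 : aeval z c * (∑ a ∈ Finset.range j, aeval z (f a)) +
          ∑ a ∈ Finset.Ico j m, aeval z (f a)
        = (aeval z c * (∑ a ∈ Finset.range i, aeval z (f a)) +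
            ∑ a ∈ Finset.Ico j m, aeval z (f a)) +
          aeval z c * (∑ a ∈ Finset.Ico i j, aeval z (f a)) := by
      rw [← Finset.sum_range_add_sum_Ico (fun a => aeval z (f a)) hij]
      ring
    rw [e1, e2]
    exact main


lemma aeval_conj (p : ℝ[X]) (z : ℂ) : aeval (conj z) p = conj (aeval z p) := by
  simpa using Polynomial.aeval_algHom_apply Complex.conjAe.toAlgHom z p

lemma GF_realRooted {f : ℕ → ℝ[X]} {m : ℕ} (hf : GF f m) :
    RealRooted (∑ j ∈ Finset.range m, f j) := by
  by_cases h : (∑ j ∈ Finset.range m, f j) = 0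
  · exact Or.inl h
  · right
    have key : ∀ w : ℂ, 0 < w.im → (aeval w) (∑ j ∈ Finset.range m, f j) ≠ 0 := by
      intro w hw h0
      rw [map_sum] at h0
      have hvan := sum_vanish hw (fun j => aeval w (f j)) m 0
        (fun i j h1 h2 h3 => hf.2 i j h2 (by omega) w hw)
        (by rw [zero_add, ← Finset.range_eq_Ico]; exact h0)
      have hallz : ∀ j, j < m → f j = 0 := by
        intro j hj
        by_contra hne
        exact hf.1 j hj w hw hne (hvan j (by omega) (by omega))
      exact h (Finset.sum_eq_zero fun j hj => hallz j (Finset.mem_range.1 hj))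
    intro z hz
    by_contra him
    rcases lt_or_gt_of_ne him with hlt | hgt
    · have hcim : 0 < (conj z).im := by rw [Complex.conj_im]; linarith
      exact key (conj z) hcim (by rw [aeval_conj, hz, map_zero])
    · exact key z hgt hz

def ins {n : ℕ} (k : Fin (n + 2)) (e : Equiv.Perm (Fin (n + 1))) : Equiv.Perm (Fin (n + 2)) :=
  ((finSuccEquiv' 0).trans (Equiv.optionCongr e)).trans (finSuccEquiv' k).symm

def del {n : ℕ} (w : Equiv.Perm (Fin (n + 2))) : Equiv.Perm (Fin (n + 1)) :=
  Equiv.removeNone (((finSuccEquiv' 0).symm.trans w).trans (finSuccEquiv' (w 0)))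

lemma ins_zero {n : ℕ} (k : Fin (n + 2)) (e : Equiv.Perm (Fin (n + 1))) : ins k e 0 = k := by
  simp [ins, Equiv.trans_apply, finSuccEquiv'_at]

lemma ins_succ {n : ℕ} (k : Fin (n + 2)) (e : Equiv.Perm (Fin (n + 1))) (i : Fin (n + 1)) :
    ins k e i.succ = k.succAbove (e i) := by
  have h1 : (finSuccEquiv' (0 : Fin (n + 2))) i.succ = some i := by
    rw [← Fin.succAbove_zero_apply, finSuccEquiv'_succAbove]
  simp [ins, Equiv.trans_apply, h1, finSuccEquiv'_symm_some]

lemma del_ins {n : ℕ} (k : Fin (n + 2)) (e : Equiv.Perm (Fin (n + 1))) : del (ins k e) = e := by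
  ext i
  have h0 : ins k e 0 = k := ins_zero k e
  have key : (((finSuccEquiv' 0).symm.trans (ins k e)).trans (finSuccEquiv' ((ins k e) 0)))
      (some i) = some (e i) := by
    simp only [Equiv.trans_apply, finSuccEquiv'_symm_some, h0]
    rw [Fin.succAbove_zero_apply, ins_succ, finSuccEquiv'_succAbove]
  have := Equiv.removeNone_some (e := ((finSuccEquiv' 0).symm.trans (ins k e)).trans
      (finSuccEquiv' ((ins k e) 0))) (x := i) ⟨e i, key⟩
  rw [key] at this
  exact Option.some_injective _ this.symm ▸ (by
    simpa [del] using Option.some_injective _ this)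

lemma ins_del {n : ℕ} (w : Equiv.Perm (Fin (n + 2))) : ins (w 0) (del w) = w := by
  ext i
  induction i using Fin.cases with
  | zero => rw [ins_zero]
  | succ i =>
    rw [ins_succ]
    have hne : w i.succ ≠ w 0 := fun h => (Fin.succ_ne_zero i) (w.injective h)
    obtain ⟨b, hb⟩ := Fin.exists_succAbove_eq hne
    have key : (((finSuccEquiv' 0).symm.trans w).trans (finSuccEquiv' (w 0))) (some i)
        = some b := by
      simp only [Equiv.trans_apply, finSuccEquiv'_symm_some]
      rw [Fin.succAbove_zero_apply, ← hb, finSuccEquiv'_succAbove]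
    have := Equiv.removeNone_some (e := ((finSuccEquiv' 0).symm.trans w).trans
        (finSuccEquiv' (w 0))) (x := i) ⟨b, key⟩
    rw [key] at this
    have hdel : del w i = b := Option.some_injective _ this
    rw [hdel, hb]

lemma one_le_mem_descSet {n : ℕ} (e : Equiv.Perm (Fin n)) {m : ℕ} (h : m ∈ descSet e) :
    1 ≤ m := by
  simp only [descSet, Finset.mem_image, Finset.mem_filter] at h
  obtain ⟨i, _, rfl⟩ := h
  omega

set_option maxHeartbeats 1000000 in
lemma mem_descSet_ins {n : ℕ} (k : Fin (n + 2)) (e : Equiv.Perm (Fin (n + 1))) (m : ℕ) :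
    m ∈ descSet (ins k e) ↔ (m = 1 ∧ (e 0 : ℕ) < (k : ℕ)) ∨ (∃ l ∈ descSet e, m = l + 1) := by
  simp only [descSet, Finset.mem_image, Finset.mem_filter, Finset.mem_univ, true_and]
  constructor
  · rintro ⟨i, hlt, rfl⟩
    rcases Nat.eq_zero_or_pos i.val with h0 | hpos
    · left
      refine ⟨by omega, ?_⟩
      have e1 : (⟨i.val + 1, by have := i.isLt; omega⟩ : Fin (n + 2)) = Fin.succ 0 := by
        ext; simp [h0]
      have e2 : (⟨i.val, by have := i.isLt; omega⟩ : Fin (n + 2)) = 0 := by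
        ext; simp [h0]
      rw [e1, e2, ins_zero, ins_succ, Fin.succAbove_lt_iff_castSucc_lt] at hlt
      simpa [Fin.lt_def] using hlt
    · right
      obtain ⟨j, hj⟩ : ∃ j : ℕ, i.val = j + 1 := ⟨i.val - 1, by omega⟩
      have hjlt : j + 1 < n + 1 := by have := i.isLt; omega
      have e1 : (⟨i.val + 1, by have := i.isLt; omega⟩ : Fin (n + 2))
          = Fin.succ ⟨j + 1, by omega⟩ := by ext; simp [hj]
      have e2 : (⟨i.val, by have := i.isLt; omega⟩ : Fin (n + 2))
          = Fin.succ ⟨j, by omega⟩ := by ext; simp [hj]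
      rw [e1, e2, ins_succ, ins_succ, Fin.succAbove_lt_succAbove_iff] at hlt
      refine ⟨j + 1, ⟨⟨j, by omega⟩, ?_, by simp⟩, by omega⟩
      convert hlt using 2 <;> ext <;> simp
  · rintro (⟨rfl, h⟩ | ⟨l, hl, rfl⟩)
    · refine ⟨⟨0, by omega⟩, ?_, by simp⟩
      have e1 : (⟨0 + 1, by omega⟩ : Fin (n + 2)) = Fin.succ 0 := by ext; simp
      have e2 : (⟨0, by omega⟩ : Fin (n + 2)) = (0 : Fin (n + 2)) := rfl
      rw [e1, e2, ins_zero, ins_succ, Fin.succAbove_lt_iff_castSucc_lt]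
      simpa [Fin.lt_def] using h
    · obtain ⟨j, hjlt, rfl⟩ := hl
      refine ⟨⟨j.val + 1, by have := j.isLt; omega⟩, ?_, by simp⟩
      have e1 : (⟨j.val + 1 + 1, by have := j.isLt; omega⟩ : Fin (n + 2))
          = Fin.succ ⟨j.val + 1, by have := j.isLt; omega⟩ := by ext; simp
      have e2 : (⟨j.val + 1, by have := j.isLt; omega⟩ : Fin (n + 2))
          = Fin.succ ⟨j.val, by have := j.isLt; omega⟩ := by ext; simp
      rw [e1, e2, ins_succ, ins_succ, Fin.succAbove_lt_succAbove_iff]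
      convert hjlt using 2 <;> ext <;> simp

lemma descSet_ins_subset_iff {n : ℕ} (k : Fin (n + 2)) (e : Equiv.Perm (Fin (n + 1)))
    (T : Finset ℕ) :
    descSet (ins k e) ⊆ T ↔ (((e 0 : ℕ) < (k : ℕ)) → 1 ∈ T) ∧ descSet e ⊆ T.image (· - 1) := by
  constructor
  · intro hsub
    constructor
    · intro h
      exact hsub ((mem_descSet_ins k e 1).2 (Or.inl ⟨rfl, h⟩))
    · intro l hl
      have h1 : l + 1 ∈ T := hsub ((mem_descSet_ins k e (l + 1)).2 (Or.inr ⟨l, hl, rfl⟩))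
      exact Finset.mem_image.2 ⟨l + 1, h1, by omega⟩
  · rintro ⟨h1, h2⟩ m hm
    rcases (mem_descSet_ins k e m).1 hm with ⟨rfl, h⟩ | ⟨l, hl, rfl⟩
    · exact h1 h
    · obtain ⟨t, ht, htl⟩ := Finset.mem_image.1 (h2 hl)
      have := one_le_mem_descSet e hl
      have : t = l + 1 := by omega
      rwa [← this]

lemma descSet_ins_eq {n : ℕ} (k : Fin (n + 2)) (e : Equiv.Perm (Fin (n + 1))) :
    descSet (ins k e) = (if (e 0 : ℕ) < (k : ℕ)
      then insert 1 ((descSet e).image (· + 1)) else (descSet e).image (· + 1)) := by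
  ext m
  rw [mem_descSet_ins]
  by_cases h : (e 0 : ℕ) < (k : ℕ) <;> simp [h, Finset.mem_image, eq_comm (a := m)]

lemma card_descSet_ins {n : ℕ} (k : Fin (n + 2)) (e : Equiv.Perm (Fin (n + 1))) :
    (descSet (ins k e)).card
      = (descSet e).card + (if (e 0 : ℕ) < (k : ℕ) then 1 else 0) := by
  rw [descSet_ins_eq]
  have hinj : ((descSet e).image (· + 1)).card = (descSet e).card :=
    Finset.card_image_of_injective _ (fun a b hab => by omega)
  by_cases h : (e 0 : ℕ) < (k : ℕ)
  · rw [if_pos h, if_pos h, Finset.card_insert_of_notMem (fun hmem => by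
      obtain ⟨l, hl, hl1⟩ := Finset.mem_image.1 hmem
      have := one_le_mem_descSet e hl
      omega), hinj]
  · rw [if_neg h, if_neg h, hinj, add_zero]

lemma ppoly_rec (n : ℕ) (k : ℕ) (hk : k ≤ n + 1) (T : Finset ℕ) :
    ppoly (n + 1) k T
      = (if 1 ∈ T then (X : Polynomial ℝ) else 0)
          * (∑ j ∈ Finset.range k, ppoly n j (T.image (· - 1)))
        + ∑ j ∈ Finset.Ico k (n + 1), ppoly n j (T.image (· - 1)) := by
  set T' := T.image (· - 1) with hT'
  set kF : Fin (n + 2) := ⟨k, by omega⟩ with hkF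
  have step1 : ppoly (n + 1) k T
      = ∑ e ∈ Finset.univ.filter (fun e : Equiv.Perm (Fin (n + 1)) =>
          (((e 0 : ℕ) < k) → 1 ∈ T) ∧ descSet e ⊆ T'),
        X ^ ((descSet e).card + (if (e 0 : ℕ) < k then 1 else 0)) := by
    rw [ppoly]
    refine Finset.sum_nbij' (fun w => del w) (fun e => ins kF e) ?_ ?_ ?_ ?_ ?_
    · intro w hw
      rw [Finset.mem_filter] at hw
      have hwkF : w 0 = kF := by ext; exact hw.2.1
      have hw' : ins kF (del w) = w := by rw [← hwkF]; exact ins_del w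
      have hsub : descSet (ins kF (del w)) ⊆ T := by rw [hw']; exact hw.2.2
      have hiff := (descSet_ins_subset_iff kF (del w) T).1 hsub
      exact Finset.mem_filter.2 ⟨Finset.mem_univ _, hiff.1, hiff.2⟩
    · intro e he
      rw [Finset.mem_filter] at he
      exact Finset.mem_filter.2 ⟨Finset.mem_univ _, by rw [ins_zero],
        (descSet_ins_subset_iff kF e T).2 ⟨he.2.1, he.2.2⟩⟩
    · intro w hw
      rw [Finset.mem_filter] at hw
      have hwkF : w 0 = kF := by ext; exact hw.2.1
      rw [← hwkF]; exact ins_del w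
    · intro e he
      exact del_ins kF e
    · intro w hw
      rw [Finset.mem_filter] at hw
      have hwkF : w 0 = kF := by ext; exact hw.2.1
      have hw' : ins kF (del w) = w := by rw [← hwkF]; exact ins_del w
      conv_lhs => rw [← hw']
      rw [card_descSet_ins]
  rw [step1]
  rw [← Finset.sum_filter_add_sum_filter_not
    (Finset.univ.filter (fun e : Equiv.Perm (Fin (n + 1)) =>
      (((e 0 : ℕ) < k) → 1 ∈ T) ∧ descSet e ⊆ T'))
    (fun e => (e 0 : ℕ) < k)]
  congr 1
  · -- part with a descent at position 1
    by_cases h1T : 1 ∈ T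
    · rw [if_pos h1T]
      have hset : (Finset.univ.filter (fun e : Equiv.Perm (Fin (n + 1)) =>
            (((e 0 : ℕ) < k) → 1 ∈ T) ∧ descSet e ⊆ T')).filter
            (fun e => (e 0 : ℕ) < k)
          = Finset.univ.filter (fun e : Equiv.Perm (Fin (n + 1)) =>
            descSet e ⊆ T' ∧ (e 0 : ℕ) < k) := by
        ext e
        simp only [Finset.mem_filter, Finset.mem_univ, true_and]
        tauto
      rw [hset]
      have hterm : ∀ e ∈ Finset.univ.filter (fun e : Equiv.Perm (Fin (n + 1)) =>
            descSet e ⊆ T' ∧ (e 0 : ℕ) < k),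
          (X : Polynomial ℝ) ^ ((descSet e).card + (if (e 0 : ℕ) < k then 1 else 0))
            = X * X ^ (descSet e).card := by
        intro e he
        rw [Finset.mem_filter] at he
        rw [if_pos he.2.2, pow_succ, mul_comm]
      rw [Finset.sum_congr rfl hterm, ← Finset.mul_sum]
      congr 1
      rw [← Finset.sum_fiberwise_of_maps_to (g := fun e : Equiv.Perm (Fin (n + 1)) =>
        (e 0 : ℕ)) (t := Finset.range k) (fun e he => by
          rw [Finset.mem_filter] at he; exact Finset.mem_range.2 he.2.2)]
      refine Finset.sum_congr rfl ?_
      intro j hj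
      rw [Finset.mem_range] at hj
      rw [ppoly]
      refine Finset.sum_congr ?_ (fun _ _ => rfl)
      ext e
      simp only [Finset.mem_filter, Finset.mem_univ, true_and]
      constructor
      · rintro ⟨⟨hD, hlt⟩, hej⟩; exact ⟨hej, hD⟩
      · rintro ⟨hej, hD⟩
        have hej' : (e 0 : ℕ) = j := hej
        subst hej'
        exact ⟨⟨hD, hj⟩, rfl⟩
    · rw [if_neg h1T, zero_mul]
      have hempty : (Finset.univ.filter (fun e : Equiv.Perm (Fin (n + 1)) =>
            (((e 0 : ℕ) < k) → 1 ∈ T) ∧ descSet e ⊆ T')).filter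
            (fun e => (e 0 : ℕ) < k) = ∅ := by
        ext e
        simp only [Finset.mem_filter, Finset.mem_univ, true_and, Finset.notMem_empty,
          iff_false, not_and]
        tauto
      rw [hempty, Finset.sum_empty]
  · -- part with no descent at position 1
    have hset : (Finset.univ.filter (fun e : Equiv.Perm (Fin (n + 1)) =>
          (((e 0 : ℕ) < k) → 1 ∈ T) ∧ descSet e ⊆ T')).filter
          (fun e => ¬ (e 0 : ℕ) < k)
        = Finset.univ.filter (fun e : Equiv.Perm (Fin (n + 1)) =>
          descSet e ⊆ T' ∧ ¬ (e 0 : ℕ) < k) := by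
      ext e
      simp only [Finset.mem_filter, Finset.mem_univ, true_and]
      tauto
    rw [hset]
    have hterm : ∀ e ∈ Finset.univ.filter (fun e : Equiv.Perm (Fin (n + 1)) =>
          descSet e ⊆ T' ∧ ¬ (e 0 : ℕ) < k),
        (X : Polynomial ℝ) ^ ((descSet e).card + (if (e 0 : ℕ) < k then 1 else 0))
          = X ^ (descSet e).card := by
      intro e he
      rw [Finset.mem_filter] at he
      rw [if_neg he.2.2, add_zero]
    rw [Finset.sum_congr rfl hterm]
    rw [← Finset.sum_fiberwise_of_maps_to (g := fun e : Equiv.Perm (Fin (n + 1)) =>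
      (e 0 : ℕ)) (t := Finset.Ico k (n + 1)) (fun e he => by
        rw [Finset.mem_filter] at he
        have h2 : ¬ (e 0 : ℕ) < k := he.2.2
        have h3 : (e 0 : ℕ) < n + 1 := (e 0).isLt
        show (e 0 : ℕ) ∈ Finset.Ico k (n + 1)
        rw [Finset.mem_Ico]
        omega)]
    refine Finset.sum_congr rfl ?_
    intro j hj
    rw [Finset.mem_Ico] at hj
    rw [ppoly]
    refine Finset.sum_congr ?_ (fun _ _ => rfl)
    ext e
    simp only [Finset.mem_filter, Finset.mem_univ, true_and]
    constructor
    · rintro ⟨⟨hD, hge⟩, hej⟩; exact ⟨hej, hD⟩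
    · rintro ⟨hej, hD⟩
      have hej' : (e 0 : ℕ) = j := hej
      subst hej'
      exact ⟨⟨hD, by omega⟩, rfl⟩

lemma descSet_one (w : Equiv.Perm (Fin 1)) : descSet w = ∅ := by
  simp [descSet]

lemma ppoly_zero_zero (T : Finset ℕ) : ppoly 0 0 T = 1 := by
  rw [ppoly]
  have h1 : (Finset.univ.filter (fun w : Equiv.Perm (Fin 1) =>
      (w 0 : ℕ) = 0 ∧ descSet w ⊆ T)) = {1} := by
    ext w
    simp only [Finset.mem_filter, Finset.mem_univ, true_and, Finset.mem_singleton]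
    constructor
    · intro _
      exact Equiv.ext fun i => Subsingleton.elim _ _
    · rintro rfl
      refine ⟨rfl, ?_⟩
      rw [descSet_one]
      exact Finset.empty_subset T
  rw [h1, Finset.sum_singleton, descSet_one, Finset.card_empty, pow_zero]

lemma apoly_eq (n : ℕ) (T : Finset ℕ) :
    Apoly (n + 1) T = ∑ k ∈ Finset.range (n + 1), ppoly n k T := by
  rw [Apoly]
  rw [← Finset.sum_fiberwise_of_maps_to (g := fun w : Equiv.Perm (Fin (n + 1)) => (w 0 : ℕ))
    (t := Finset.range (n + 1)) (fun w _ => Finset.mem_range.2 (w 0).isLt)]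
  refine Finset.sum_congr rfl ?_
  intro j hj
  rw [ppoly]
  refine Finset.sum_congr ?_ (fun _ _ => rfl)
  ext w
  simp only [Finset.mem_filter, Finset.mem_univ, true_and]
  constructor
  · rintro ⟨hD, hw⟩; exact ⟨hw, hD⟩
  · rintro ⟨hw, hD⟩; exact ⟨hD, hw⟩


lemma GF_ppoly (n : ℕ) (T : Finset ℕ) : GF (fun k => ppoly n k T) (n + 1) := by
  induction n generalizing T with
  | zero =>
    constructor
    · intro j hj z hz hne
      have hj0 : j = 0 := by omega
      subst hj0
      simp only [ppoly_zero_zero, map_one]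
      exact one_ne_zero
    · intro i j hij hj z hz
      have hi0 : i = 0 := by omega
      have hj0 : j = 0 := by omega
      subst hi0; subst hj0
      simp only [ppoly_zero_zero, map_one]
      exact Jz_self hz.le
  | succ n ih =>
    exact engine (f := fun j => ppoly n j (T.image (· - 1)))
      (g := fun k => ppoly (n + 1) k T) (m := n + 1)
      (c := if 1 ∈ T then X else 0)
      (by by_cases h : 1 ∈ T
          · exact Or.inl (if_pos h)
          · exact Or.inr (if_neg h))
      (fun k hk => ppoly_rec n k hk T)
      (ih (T.image (· - 1)))

end Aux

/-- For every positive integer `n` and every `T ⊆ [n-1]`, the polynomial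
`A^T_n(x)` has only real roots. -/
theorem stmt0 (n : ℕ) (hn : 0 < n) (T : Finset ℕ) (hT : T ⊆ Finset.Icc 1 (n - 1)) :
    RealRooted (Apoly n T) := by
  obtain ⟨m, rfl⟩ : ∃ m, n = m + 1 := ⟨n - 1, by omega⟩
  rw [apoly_eq]
  exact GF_realRooted (GF_ppoly m T)
end
end

section
/- Let n ≥ 1 and T ⊆ [n] with 1 ∉ T. Then for every k ∈ {0,1,...,n}, p^T_{n,k}(x) = Σ_{i=k}^{n-1} p^{T-1}_{n-1,i}(x), where T-1 = {a-1 : a ∈ T}. -/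
open Polynomial

open scoped Classical

noncomputable section

lemma mem_descSet {m : ℕ} (w : Equiv.Perm (Fin m)) (d : ℕ) :
    d ∈ descSet w ↔ ∃ i : Fin (m - 1), d = i.val + 1 ∧
      w ⟨i.val + 1, by have := i.isLt; omega⟩ < w ⟨i.val, by have := i.isLt; omega⟩ := by
  simp [descSet, eq_comm, and_comm]

def insPerm {n : ℕ} (k : Fin (n+1)) (v : Equiv.Perm (Fin n)) : Equiv.Perm (Fin (n+1)) :=
  (finSuccEquiv n).trans ((Equiv.optionCongr v).trans (finSuccEquiv' k).symm)

@[simp] lemma insPerm_zero {n : ℕ} (k : Fin (n+1)) (v : Equiv.Perm (Fin n)) :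
    insPerm k v 0 = k := by
  simp [insPerm, Equiv.trans_apply]

@[simp] lemma insPerm_succ {n : ℕ} (k : Fin (n+1)) (v : Equiv.Perm (Fin n)) (i : Fin n) :
    insPerm k v i.succ = k.succAbove (v i) := by
  simp [insPerm, Equiv.trans_apply]

def delPerm {n : ℕ} (w : Equiv.Perm (Fin (n+1))) : Equiv.Perm (Fin n) :=
  ((finSuccEquiv n).symm.trans (w.trans (finSuccEquiv' (w 0)))).removeNone

lemma delPerm_spec {n : ℕ} (w : Equiv.Perm (Fin (n+1))) (i : Fin n) :
    (w 0).succAbove (delPerm w i) = w i.succ := by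
  set E := (finSuccEquiv n).symm.trans (w.trans (finSuccEquiv' (w 0))) with hE
  have hne : w i.succ ≠ w 0 := by
    intro h
    exact (Fin.succ_ne_zero i) (w.injective h)
  have hEi : E (some i) = finSuccEquiv' (w 0) (w i.succ) := by
    simp [hE, Equiv.trans_apply]
  have hex : ∃ y, E (some i) = some y := by
    rw [hEi]
    rcases h : finSuccEquiv' (w 0) (w i.succ) with _ | y
    · exfalso
      apply hne
      have := congrArg (finSuccEquiv' (w 0)).symm h
      simpa using this
    · exact ⟨y, rfl⟩
  have h1 : some (E.removeNone i) = E (some i) := Equiv.removeNone_some E hex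
  have h2 : some (delPerm w i) = finSuccEquiv' (w 0) (w i.succ) := by
    rw [← hEi]; exact h1
  have := congrArg (finSuccEquiv' (w 0)).symm h2
  simpa using this

lemma insPerm_delPerm {n : ℕ} (w : Equiv.Perm (Fin (n+1))) :
    insPerm (w 0) (delPerm w) = w := by
  ext x
  rcases Fin.eq_zero_or_eq_succ x with rfl | ⟨i, rfl⟩
  · simp
  · rw [insPerm_succ, delPerm_spec]

lemma delPerm_insPerm {n : ℕ} (k : Fin (n+1)) (v : Equiv.Perm (Fin n)) :
    delPerm (insPerm k v) = v := by
  ext i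
  have h := delPerm_spec (insPerm k v) i
  rw [insPerm_succ, insPerm_zero] at h
  have := Fin.succAbove_right_injective (p := k) h
  rw [this]

lemma succAbove_val {n : ℕ} (k : Fin (n+1)) (x : Fin n) :
    ((k.succAbove x : Fin (n+1)) : ℕ) = if (x:ℕ) < (k:ℕ) then (x:ℕ) else (x:ℕ)+1 := by
  rw [Fin.succAbove]
  split_ifs with h h' <;> simp_all [Fin.lt_def] <;> omega

lemma mem_descSet_succ {m : ℕ} (w : Equiv.Perm (Fin (m+1))) (d : ℕ) :
    d ∈ descSet w ↔ ∃ i : Fin m, d = i.val + 1 ∧ w i.succ < w i.castSucc := by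
  rw [mem_descSet]
  constructor <;> rintro ⟨i, rfl, h⟩
  · exact ⟨i, rfl, by convert h using 2 <;> ext <;> simp⟩
  · exact ⟨i, rfl, by convert h using 2 <;> ext <;> simp⟩

lemma descSet_insPerm {m : ℕ} (k : Fin (m+2)) (v : Equiv.Perm (Fin (m+1)))
    (hkv : (k:ℕ) ≤ (v 0 : ℕ)) :
    descSet (insPerm k v) = (descSet v).image (· + 1) := by
  ext d
  simp only [mem_descSet_succ, Finset.mem_image]
  constructor
  · rintro ⟨i, rfl, hlt⟩
    rcases Fin.eq_zero_or_eq_succ i with rfl | ⟨j, rfl⟩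
    · exfalso
      rw [Fin.castSucc_zero, insPerm_zero, insPerm_succ, Fin.lt_def, succAbove_val] at hlt
      split_ifs at hlt <;> omega
    · rw [← Fin.succ_castSucc, insPerm_succ, insPerm_succ,
        Fin.succAbove_lt_succAbove_iff] at hlt
      exact ⟨j.val + 1, ⟨j, rfl, hlt⟩, by simp⟩
  · rintro ⟨a, ⟨j, rfl, hlt⟩, rfl⟩
    refine ⟨j.succ, by simp, ?_⟩
    rw [← Fin.succ_castSucc, insPerm_succ, insPerm_succ, Fin.succAbove_lt_succAbove_iff]
    exact hlt

lemma image_add_one_subset_iff {T S : Finset ℕ} (hT0 : 0 ∉ T) (h1T : 1 ∉ T) :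
    S.image (· + 1) ⊆ T ↔ S ⊆ T.image (fun a => a - 1) := by
  constructor
  · intro h d hd
    exact Finset.mem_image.mpr ⟨d + 1, h (Finset.mem_image.mpr ⟨d, hd, rfl⟩), rfl⟩
  · intro h e he
    obtain ⟨d, hd, rfl⟩ := Finset.mem_image.mp he
    obtain ⟨a, ha, had⟩ := Finset.mem_image.mp (h hd)
    have h0 : a ≠ 0 := fun h' => hT0 (h' ▸ ha)
    have h1 : a ≠ 1 := fun h' => h1T (h' ▸ ha)
    have : a = d + 1 := by omega
    exact this ▸ ha


/-- Let `n ≥ 1` and `T ⊆ [n]` with `1 ∉ T`. Then for every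
`k ∈ {0,1,…,n}`, `p^T_{n,k}(x) = Σ_{i=k}^{n-1} p^{T-1}_{n-1,i}(x)`. -/
theorem stmt3 (n : ℕ) (hn : 1 ≤ n) (T : Finset ℕ) (hT : T ⊆ Finset.Icc 1 n)
    (h1T : 1 ∉ T) (k : ℕ) (hk : k ≤ n) :
    ppoly n k T = ∑ i ∈ Finset.Ico k n, ppoly (n - 1) i (T.image (fun a => a - 1)) := by
  obtain ⟨m, rfl⟩ : ∃ m, n = m + 1 := ⟨n - 1, by omega⟩
  simp only [Nat.add_sub_cancel]
  set T' := T.image (fun a => a - 1) with hT'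
  have hT0 : 0 ∉ T := fun h => by simpa using hT h
  -- Step A: collapse the RHS double sum into one sum over S_{m+1}
  have stepA : ∑ i ∈ Finset.Ico k (m+1), ppoly m i T'
      = ∑ v ∈ Finset.univ.filter (fun v : Equiv.Perm (Fin (m+1)) =>
          k ≤ (v 0 : ℕ) ∧ descSet v ⊆ T'), X ^ (descSet v).card := by
    rw [← Finset.sum_fiberwise_of_maps_to
      (g := fun v : Equiv.Perm (Fin (m+1)) => (v 0 : ℕ)) (t := Finset.Ico k (m+1))
      (fun v hv => by
        simp only [Finset.mem_filter] at hv
        exact Finset.mem_Ico.mpr ⟨hv.2.1, (v 0).isLt⟩)]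
    apply Finset.sum_congr rfl
    intro i hi
    rw [Finset.mem_Ico] at hi
    unfold ppoly
    apply Finset.sum_congr _ (fun _ _ => rfl)
    ext v
    simp only [Finset.mem_filter, Finset.mem_univ, true_and]
    constructor
    · rintro ⟨h1, h2⟩
      exact ⟨⟨by omega, h2⟩, h1⟩
    · rintro ⟨⟨h1, h2⟩, h3⟩
      exact ⟨h3, h2⟩
  rw [stepA]
  -- Step B: the insertion bijection
  unfold ppoly
  have hk2 : k < m + 2 := by omega
  apply Finset.sum_nbij' (i := fun w => delPerm w) (j := fun v => insPerm ⟨k, hk2⟩ v)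
  · intro w hw
    simp only [Finset.mem_filter, Finset.mem_univ, true_and] at hw ⊢
    obtain ⟨hw0, hwT⟩ := hw
    have hw0' : w 0 = ⟨k, hk2⟩ := Fin.ext hw0
    set v := delPerm w with hv
    have hwi : w = insPerm ⟨k, hk2⟩ v := by rw [hv, ← hw0', insPerm_delPerm]
    have hkv : k ≤ (v 0 : ℕ) := by
      by_contra hc
      push_neg at hc
      have h1mem : 1 ∈ descSet w := by
        rw [mem_descSet_succ]
        refine ⟨0, rfl, ?_⟩
        rw [hwi, Fin.castSucc_zero, insPerm_zero, insPerm_succ, Fin.lt_def, succAbove_val]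
        split_ifs <;> simp <;> omega
      exact h1T (hwT h1mem)
    have hdes : descSet w = (descSet v).image (· + 1) := by
      rw [hwi]; exact descSet_insPerm _ _ hkv
    refine ⟨hkv, ?_⟩
    rw [← image_add_one_subset_iff hT0 h1T, ← hdes]
    exact hwT
  · intro v hv
    simp only [Finset.mem_filter, Finset.mem_univ, true_and] at hv ⊢
    obtain ⟨hkv, hvT⟩ := hv
    have hdes : descSet (insPerm ⟨k, hk2⟩ v) = (descSet v).image (· + 1) :=
      descSet_insPerm _ _ hkv
    refine ⟨by simp, ?_⟩
    rw [hdes, image_add_one_subset_iff hT0 h1T]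
    exact hvT
  · intro w hw
    simp only [Finset.mem_filter, Finset.mem_univ, true_and] at hw
    have hw0' : w 0 = ⟨k, hk2⟩ := Fin.ext hw.1
    rw [← hw0', insPerm_delPerm]
  · intro v hv
    exact delPerm_insPerm _ _
  · intro w hw
    simp only [Finset.mem_filter, Finset.mem_univ, true_and] at hw
    obtain ⟨hw0, hwT⟩ := hw
    have hw0' : w 0 = ⟨k, hk2⟩ := Fin.ext hw0
    set v := delPerm w with hv
    have hwi : w = insPerm ⟨k, hk2⟩ v := by rw [hv, ← hw0', insPerm_delPerm]
    have hkv : k ≤ (v 0 : ℕ) := by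
      by_contra hc
      push_neg at hc
      have h1mem : 1 ∈ descSet w := by
        rw [mem_descSet_succ]
        refine ⟨0, rfl, ?_⟩
        rw [hwi, Fin.castSucc_zero, insPerm_zero, insPerm_succ, Fin.lt_def, succAbove_val]
        split_ifs <;> simp <;> omega
      exact h1T (hwT h1mem)
    have hdes : descSet w = (descSet v).image (· + 1) := by
      rw [hwi]; exact descSet_insPerm _ _ hkv
    rw [hdes, Finset.card_image_of_injective _ (fun a b hab => by omega)]
end
end

section
/- For every positive integer n and every T ⊆ [n-1], the polynomial A^T_n(x) is log-concave and unimodal. -/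
open Polynomial

open scoped Classical

noncomputable section

/-- The coefficient sequence of `p` is log-concave: `h_{i-1}·h_{i+1} ≤ h_i²`. -/
def CoeffLogConcave (p : Polynomial ℝ) : Prop :=
  ∀ i : ℕ, 1 ≤ i → p.coeff (i - 1) * p.coeff (i + 1) ≤ p.coeff i ^ 2

/-- The coefficient sequence of `p` is unimodal: for some peak position `k`,
`h_0 ≤ h_1 ≤ ⋯ ≤ h_k ≥ h_{k+1} ≥ ⋯`. -/
def CoeffUnimodal (p : Polynomial ℝ) : Prop :=
  ∃ k : ℕ, (∀ i : ℕ, i < k → p.coeff i ≤ p.coeff (i + 1)) ∧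
    (∀ i : ℕ, k ≤ i → p.coeff (i + 1) ≤ p.coeff i)

/-! Split the coefficients of `A^T_{n+1}` by the first value `k` of the permutation, giving an
array `N k j` (first value `k`, `j` descents). For `k ≤ l` it satisfies
`N k a * N l (b + 1) ≤ N k (a + 1) * N l b` for `a < b`, and the same with `k, l` exchanged for
`a ≤ b`. Deleting the first entry expresses the array for `n + 1` through the one for `n` and
`T - 1`: row `k` is the sum of the old rows `i ≥ k` and, if `1 ∈ T`, of the old rows `i < k`
shifted by one descent. In the symmetrised double sums each pair of terms is either compared
directly by the inequalities or exchanged, so the inequalities persist. Summing over `k`, the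
coefficients `c j` of `A^T_{n+1}` satisfy `c a * c (b + 1) ≤ c (a + 1) * c b` for `a < b`: this
is log-concavity, and together with `c 0 = 1` it rules out internal zeros and gives unimodality.
-/

open Finset Equiv

section CrossLogConcave

variable {ι : Type*} [Add ι] [One ι] [LE ι]

def CrossLogConcave (d : ι) (x y : ι → ℝ) : Prop :=
  ∀ a b, a + d ≤ b → x a * y (b + 1) ≤ x (a + 1) * y b

lemma CrossLogConcave.zero_left (d : ι) (y : ι → ℝ) : CrossLogConcave d (fun _ => 0) y :=
  fun _ _ _ => by simp

lemma CrossLogConcave.zero_right (d : ι) (x : ι → ℝ) : CrossLogConcave d x (fun _ => 0) :=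
  fun _ _ _ => by simp

end CrossLogConcave

lemma CrossLogConcave.mono {d d' : ℤ} {x y : ℤ → ℝ} (h : CrossLogConcave d x y)
    (hd : d ≤ d') : CrossLogConcave d' x y :=
  fun a b hab => h a b (by omega)

lemma sum_sum_le_sum_sum_of_swap {s : Finset ℕ} {u v : ℕ → ℕ → ℝ}
    (h : ∀ i ∈ s, ∀ i' ∈ s, i ≤ i' → u i i' + u i' i ≤ v i i' + v i' i) :
    ∑ i ∈ s, ∑ i' ∈ s, u i i' ≤ ∑ i ∈ s, ∑ i' ∈ s, v i i' := by
  have hsym : ∀ i ∈ s, ∀ i' ∈ s, u i i' + u i' i ≤ v i i' + v i' i := by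
    intro i hi i' hi'
    rcases le_total i i' with hle | hle
    · exact h i hi i' hi' hle
    · linarith [h i' hi' i hi hle]
  have hu : ∑ i ∈ s, ∑ i' ∈ s, u i' i = ∑ i ∈ s, ∑ i' ∈ s, u i i' := sum_comm
  have hv : ∑ i ∈ s, ∑ i' ∈ s, v i' i = ∑ i ∈ s, ∑ i' ∈ s, v i i' := sum_comm
  have := sum_le_sum fun i hi => sum_le_sum fun i' hi' => hsym i hi i' hi'
  simp only [sum_add_distrib] at this
  linarith

lemma crossLogConcave_sum {d : ℤ} {s : Finset ℕ} {f g : ℕ → ℤ → ℝ}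
    (h : ∀ i ∈ s, ∀ i' ∈ s, i ≤ i' → ∀ a b, a + d ≤ b →
      f i a * g i' (b + 1) + f i' a * g i (b + 1) ≤ f i (a + 1) * g i' b + f i' (a + 1) * g i b) :
    CrossLogConcave d (fun j => ∑ i ∈ s, f i j) (fun j => ∑ i ∈ s, g i j) := by
  intro a b hab
  simp only [sum_mul_sum]
  exact sum_sum_le_sum_sum_of_swap fun i hi i' hi' hii' => h i hi i' hi' hii' a b hab

/-- In the second alternative the two sides are the same sum with its terms exchanged. -/
lemma shifted_cross_pair_le {x y : ℤ → ℝ} {ε : ℝ} (hxy : CrossLogConcave 1 x y)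
    (hyx : CrossLogConcave 0 y x) (hε : 0 ≤ ε) {a b : ℤ} {p q p' q' : ℕ}
    (h : (a - p + 1 ≤ b - q ∧ a - p' ≤ b - q') ∨ (a - p = b - q' ∧ a - p' = b - q)) :
    ε ^ p * x (a - p) * (ε ^ q * y (b + 1 - q))
        + ε ^ p' * y (a - p') * (ε ^ q' * x (b + 1 - q'))
      ≤ ε ^ p * x (a + 1 - p) * (ε ^ q * y (b - q))
        + ε ^ p' * y (a + 1 - p') * (ε ^ q' * x (b - q')) := by
  rcases h with ⟨h₁, h₂⟩ | ⟨h₁, h₂⟩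
  · have e₁ := hxy (a - p) (b - q) h₁
    have e₂ := hyx (a - p') (b - q') (by omega)
    simp only [sub_add_eq_add_sub] at e₁ e₂
    have c₁ := mul_nonneg (pow_nonneg hε p) (pow_nonneg hε q)
    have c₂ := mul_nonneg (pow_nonneg hε p') (pow_nonneg hε q')
    linarith [mul_le_mul_of_nonneg_left e₁ c₁, mul_le_mul_of_nonneg_left e₂ c₂]
  · have hpq : ε ^ p * ε ^ q = ε ^ p' * ε ^ q' := by
      rw [← pow_add, ← pow_add]; congr 1; omega
    have h₃ : b + 1 - q = a + 1 - p' := by omega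
    have h₄ : b + 1 - q' = a + 1 - p := by omega
    rw [h₁, h₂, h₃, h₄]
    linear_combination (x (b - q') * y (a + 1 - p') - y (b - q) * x (a + 1 - p)) * hpq

def CrossLogConcaveRows (N : ℕ → ℤ → ℝ) : Prop :=
  ∀ k l, k ≤ l → CrossLogConcave 1 (N k) (N l) ∧ CrossLogConcave 0 (N l) (N k)

lemma CrossLogConcaveRows.crossLogConcave {N : ℕ → ℤ → ℝ} (hN : CrossLogConcaveRows N)
    (k l : ℕ) : CrossLogConcave 1 (N k) (N l) := by
  rcases le_total k l with h | h
  · exact (hN k l h).1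
  · exact (hN l k h).2.mono zero_le_one

def shiftAt (k i : ℕ) : ℕ := if k ≤ i then 0 else 1

def prependRows (N : ℕ → ℤ → ℝ) (ε : ℝ) (n k : ℕ) (j : ℤ) : ℝ :=
  if k ≤ n then ∑ i ∈ range n, ε ^ shiftAt k i * N i (j - shiftAt k i) else 0

lemma CrossLogConcaveRows.prependRows {N : ℕ → ℤ → ℝ} {ε : ℝ} (hN : CrossLogConcaveRows N)
    (hε : 0 ≤ ε) (n : ℕ) : CrossLogConcaveRows (prependRows N ε n) := by
  intro k l hkl
  unfold _root_.prependRows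
  by_cases hl : l ≤ n
  swap
  · simp only [if_neg hl]
    exact ⟨.zero_right _ _, .zero_left _ _⟩
  simp only [if_pos hl, if_pos (hkl.trans hl)]
  constructor <;> refine crossLogConcave_sum fun i _ i' _ hii' a b hab => ?_ <;>
    refine shifted_cross_pair_le (hN i i' hii').1 (hN i i' hii').2 hε ?_ <;>
    simp only [shiftAt] <;> split_ifs <;> omega

lemma mem_descSet_s5 {n : ℕ} (w : Perm (Fin (n + 1))) (s : ℕ) :
    s ∈ descSet w ↔ ∃ i : Fin n, w i.succ < w i.castSucc ∧ (i : ℕ) + 1 = s := by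
  simp only [descSet, mem_image, mem_filter, mem_univ, true_and]
  rfl

lemma descSet_one_s5 (n : ℕ) : descSet (1 : Perm (Fin n)) = ∅ := by
  ext s
  simp [descSet]

/-- The permutation with first value `κ` whose remaining values are in the relative order
given by `v`. -/
def consPerm {n : ℕ} (κ : Fin (n + 1)) (v : Perm (Fin n)) : Perm (Fin (n + 1)) :=
  (finSuccEquiv' 0).trans ((optionCongr v).trans (finSuccEquiv' κ).symm)

section consPerm

variable {n : ℕ} (κ : Fin (n + 1)) (v : Perm (Fin n))

@[simp]
lemma consPerm_zero : consPerm κ v 0 = κ := by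
  simp [consPerm, finSuccEquiv'_at]

@[simp]
lemma consPerm_succ (j : Fin n) : consPerm κ v j.succ = κ.succAbove (v j) := by
  have h : finSuccEquiv' (0 : Fin (n + 1)) j.succ = some j := by
    rw [← Fin.zero_succAbove j, finSuccEquiv'_succAbove]
  simp [consPerm, h, finSuccEquiv'_symm_some]

lemma consPerm_bijective :
    Function.Bijective fun p : Fin (n + 1) × Perm (Fin n) => consPerm p.1 p.2 := by
  rw [Fintype.bijective_iff_injective_and_card]
  refine ⟨fun ⟨κ, v⟩ ⟨κ', v'⟩ h => ?_, ?_⟩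
  · have hκ : κ = κ' := by simpa using congr($h 0)
    subst hκ
    have hv : v = v' := Equiv.ext fun j => by simpa using congr($h j.succ)
    rw [hv]
  · simp [Fintype.card_perm, Nat.factorial_succ]

end consPerm

section consPermDescents

variable {m : ℕ} (κ : Fin (m + 2)) (v : Perm (Fin (m + 1)))

lemma descSet_consPerm :
    descSet (consPerm κ v) = if (v 0 : ℕ) < κ then insert 1 ((descSet v).image (· + 1))
      else (descSet v).image (· + 1) := by
  ext s
  rw [mem_descSet_s5, Fin.exists_fin_succ]
  simp only [← Fin.succ_castSucc, consPerm_succ, Fin.castSucc_zero, consPerm_zero,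
    Fin.succAbove_lt_iff_castSucc_lt, Fin.succAbove_lt_succAbove_iff, Fin.val_zero, Fin.val_succ,
    zero_add]
  have hv : (∃ i : Fin m, v i.succ < v i.castSucc ∧ (i : ℕ) + 1 + 1 = s) ↔
      s ∈ (descSet v).image (· + 1) := by
    simp only [mem_image, mem_descSet_s5]
    constructor
    · rintro ⟨i, hi, rfl⟩
      exact ⟨_, ⟨i, hi, rfl⟩, rfl⟩
    · rintro ⟨_, ⟨i, hi, rfl⟩, rfl⟩
      exact ⟨i, hi, rfl⟩
  rw [hv, Fin.lt_def, Fin.val_castSucc]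
  split_ifs with h <;> simp [h, eq_comm]

lemma one_notMem_image_descSet : 1 ∉ (descSet v).image (· + 1) := by
  simp only [mem_image, mem_descSet_s5, not_exists, not_and]
  omega

lemma card_descSet_consPerm :
    (descSet (consPerm κ v)).card = (descSet v).card + if (v 0 : ℕ) < κ then 1 else 0 := by
  rw [descSet_consPerm]
  split_ifs
  · rw [card_insert_of_notMem (one_notMem_image_descSet v),
      card_image_of_injective _ (add_left_injective 1)]
  · rw [card_image_of_injective _ (add_left_injective 1), add_zero]

def shiftDown (T : Finset ℕ) : Finset ℕ := T.preimage (· + 1) (add_left_injective 1).injOn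

lemma descSet_consPerm_subset_iff (T : Finset ℕ) :
    descSet (consPerm κ v) ⊆ T ↔ ((v 0 : ℕ) < κ → 1 ∈ T) ∧ descSet v ⊆ shiftDown T := by
  have himage : (descSet v).image (· + 1) ⊆ T ↔ descSet v ⊆ shiftDown T := by
    simp [subset_iff, shiftDown]
  rw [descSet_consPerm]
  split_ifs with h <;> simp [insert_subset_iff, himage, h]

end consPermDescents

/-- Indexed by `j : ℤ`, so that the shift `j - 1` in `descCount_succ` needs no truncated
subtraction: negative `j` simply give `0`. -/
def descCount (n : ℕ) (T : Finset ℕ) (k : ℕ) (j : ℤ) : ℝ :=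
  (univ.filter fun w : Perm (Fin (n + 1)) =>
    (w 0 : ℕ) = k ∧ descSet w ⊆ T ∧ ((descSet w).card : ℤ) = j).card

lemma descCount_eq_sum (n : ℕ) (T : Finset ℕ) (k : ℕ) (j : ℤ) :
    descCount n T k j = ∑ w ∈ univ.filter (fun w : Perm (Fin (n + 1)) => (w 0 : ℕ) = k),
      if descSet w ⊆ T ∧ ((descSet w).card : ℤ) = j then 1 else 0 := by
  rw [descCount, ← filter_filter, natCast_card_filter]

lemma descCount_nonneg (n : ℕ) (T : Finset ℕ) (k : ℕ) (j : ℤ) : 0 ≤ descCount n T k j := by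
  unfold descCount
  positivity

lemma descCount_zero_of_ne_zero (T : Finset ℕ) (k : ℕ) {j : ℤ} (hj : j ≠ 0) :
    descCount 0 T k j = 0 := by
  have hdesc (w : Perm (Fin 1)) : descSet w = ∅ := by
    rw [Subsingleton.elim w 1, descSet_one_s5]
  simp [descCount, hdesc, hj.symm]

lemma descCount_succ (m : ℕ) (T : Finset ℕ) (k : ℕ) :
    descCount (m + 1) T k =
      prependRows (descCount m (shiftDown T)) (if 1 ∈ T then 1 else 0) (m + 1) k := by
  funext j
  unfold prependRows
  by_cases hk : k ≤ m + 1
  swap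
  · rw [if_neg hk, descCount, Nat.cast_eq_zero, card_eq_zero, filter_eq_empty_iff]
    rintro w - ⟨hw, -⟩
    have := (w 0).isLt
    omega
  have hκ : ∀ κ : Fin (m + 2), (κ : ℕ) = k ↔ κ = ⟨k, by omega⟩ := fun κ => by
    simp [Fin.ext_iff]
  rw [if_pos hk, descCount_eq_sum, sum_filter,
    ← Fintype.sum_bijective _ consPerm_bijective _ _ fun _ => rfl, Fintype.sum_prod_type]
  simp only [consPerm_zero, hκ, sum_ite_irrel, sum_const_zero, Fintype.sum_ite_eq',
    descSet_consPerm_subset_iff, card_descSet_consPerm]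
  rw [← sum_fiberwise_of_maps_to (g := fun v : Perm (Fin (m + 1)) => (v 0 : ℕ))
    (t := range (m + 1)) fun v _ => mem_range.2 (v 0).isLt]
  refine sum_congr rfl fun i _ => ?_
  rw [descCount_eq_sum, mul_sum]
  refine sum_congr rfl fun v hv => ?_
  rw [(mem_filter.1 hv).2]
  unfold shiftAt
  by_cases hki : k ≤ i
  · simp [hki, not_lt.2 hki]
  · have hik : i < k := by omega
    by_cases h1 : 1 ∈ T
    · simp [hki, hik, h1, eq_sub_iff_add_eq]
    · simp [hki, hik, h1]

lemma crossLogConcaveRows_descCount_zero (T : Finset ℕ) :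
    CrossLogConcaveRows (descCount 0 T) := by
  have h {d : ℤ} (hd : 0 ≤ d) (k l : ℕ) :
      CrossLogConcave d (descCount 0 T k) (descCount 0 T l) := by
    intro a b hab
    have hzero : descCount 0 T k a * descCount 0 T l (b + 1) = 0 := by
      rcases eq_or_ne a 0 with rfl | ha
      · rw [descCount_zero_of_ne_zero T l (by omega), mul_zero]
      · rw [descCount_zero_of_ne_zero T k ha, zero_mul]
    rw [hzero]
    exact mul_nonneg (descCount_nonneg ..) (descCount_nonneg ..)
  exact fun k l _ => ⟨h zero_le_one k l, h le_rfl l k⟩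

lemma crossLogConcaveRows_descCount (n : ℕ) (T : Finset ℕ) :
    CrossLogConcaveRows (descCount n T) := by
  induction n generalizing T with
  | zero => exact crossLogConcaveRows_descCount_zero T
  | succ m ih =>
    rw [funext (descCount_succ m T)]
    exact (ih (shiftDown T)).prependRows (by positivity) (m + 1)

lemma coeff_Apoly (n : ℕ) (T : Finset ℕ) (j : ℕ) :
    (Apoly n T).coeff j =
      (univ.filter fun w : Perm (Fin n) => descSet w ⊆ T ∧ (descSet w).card = j).card := by
  simp only [Apoly, finsetSum_coeff, coeff_X_pow, sum_boole, filter_filter, eq_comm]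

lemma coeff_Apoly_succ (m : ℕ) (T : Finset ℕ) (j : ℕ) :
    (Apoly (m + 1) T).coeff j = ∑ k ∈ range (m + 1), descCount m T k j := by
  rw [coeff_Apoly, card_eq_sum_card_fiberwise (f := fun w => (w 0 : ℕ)) (t := range (m + 1))
    fun w _ => mem_range.2 (w 0).isLt]
  push_cast
  refine sum_congr rfl fun k _ => ?_
  simp only [descCount, filter_filter, Nat.cast_inj]
  congr 2
  ext w
  tauto

lemma coeff_Apoly_nonneg (n : ℕ) (T : Finset ℕ) (j : ℕ) : 0 ≤ (Apoly n T).coeff j := by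
  rw [coeff_Apoly]
  positivity

lemma coeff_Apoly_zero_pos (n : ℕ) (T : Finset ℕ) : 0 < (Apoly n T).coeff 0 := by
  rw [coeff_Apoly, Nat.cast_pos, card_pos]
  exact ⟨1, by simp [descSet_one_s5]⟩

lemma crossLogConcave_coeff_Apoly (n : ℕ) (T : Finset ℕ) :
    CrossLogConcave 1 (Apoly n T).coeff (Apoly n T).coeff := by
  cases n with
  | zero =>
    intro a b _
    have : (Apoly 0 T).coeff (b + 1) = 0 := by simp [coeff_Apoly, descSet]
    rw [this, mul_zero]
    exact mul_nonneg (coeff_Apoly_nonneg ..) (coeff_Apoly_nonneg ..)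
  | succ m =>
    have hrows := crossLogConcaveRows_descCount m T
    have hsum : CrossLogConcave 1 (fun j => ∑ k ∈ range (m + 1), descCount m T k j)
        (fun j => ∑ k ∈ range (m + 1), descCount m T k j) :=
      crossLogConcave_sum fun k _ l _ _ a b hab =>
        add_le_add (hrows.crossLogConcave k l a b hab) (hrows.crossLogConcave l k a b hab)
    intro a b hab
    simpa only [coeff_Apoly_succ, Nat.cast_add, Nat.cast_one] using hsum a b (by omega)

lemma coeffLogConcave_of_crossLogConcave {p : ℝ[X]} (h : CrossLogConcave 1 p.coeff p.coeff) :
    CoeffLogConcave p := by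
  intro i hi
  have := h (i - 1) i (by omega)
  rwa [Nat.sub_add_cancel hi, ← sq] at this

lemma coeffUnimodal_of_crossLogConcave {p : ℝ[X]} (h₀ : 0 < p.coeff 0)
    (hnonneg : ∀ j, 0 ≤ p.coeff j) (h : CrossLogConcave 1 p.coeff p.coeff) :
    CoeffUnimodal p := by
  have hdesc : ∃ j, p.coeff (j + 1) ≤ p.coeff j :=
    ⟨p.natDegree + 1, by simp [coeff_eq_zero_of_natDegree_lt]⟩
  refine ⟨Nat.find hdesc, fun i hi => (not_le.1 (Nat.find_min hdesc hi)).le, fun i hi => ?_⟩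
  induction i, hi using Nat.le_induction with
  | base => exact Nat.find_spec hdesc
  | succ i _ ih =>
    rcases (hnonneg (i + 1)).eq_or_lt with hzero | hpos
    · -- a zero coefficient after the positive `p.coeff 0` forces the next one to vanish
      have := h 0 (i + 1) (by omega)
      rw [← hzero, mul_zero] at this
      nlinarith [hnonneg (i + 1 + 1)]
    · have := h i (i + 1) (by omega)
      nlinarith

theorem stmt5_general (n : ℕ) (T : Finset ℕ) :
    CoeffLogConcave (Apoly n T) ∧ CoeffUnimodal (Apoly n T) :=
  ⟨coeffLogConcave_of_crossLogConcave (crossLogConcave_coeff_Apoly n T),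
    coeffUnimodal_of_crossLogConcave (coeff_Apoly_zero_pos n T) (coeff_Apoly_nonneg n T)
      (crossLogConcave_coeff_Apoly n T)⟩

/-- For every positive integer `n` and every `T ⊆ [n-1]`, the polynomial
`A^T_n(x)` is log-concave and unimodal. -/
theorem stmt5 (n : ℕ) (hn : 0 < n) (T : Finset ℕ) (hT : T ⊆ Finset.Icc 1 (n - 1)) :
    CoeffLogConcave (Apoly n T) ∧ CoeffUnimodal (Apoly n T) :=
  stmt5_general n T
end
end

section
/- Let T = {a_1, a_2, ..., a_r} ⊆ [n-1] with 1 ≤ a_1 < a_2 < ... < a_r < n, set a_0 = 0 and a_{r+1} = n, and let c_i = a_i − a_{i-1} for i ∈ [r+1]. If N = #{w ∈ S_n : Des(w) ⊆ T}, then Σ_{w ∈ S_n : Des(w) ⊆ T} des(w) = N · ( r − Σ_{i=1}^r binom(c_i + c_{i+1}, c_i)^{-1} ). Equivalently, for each i ∈ [r], the number of w ∈ S_n with Des(w) ⊆ T and a_i ∈ Des(w) equals N·(1 − binom(c_i + c_{i+1}, c_i)^{-1}). -/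
/-!
A permutation has all its descents in `T = {a_1 < ⋯ < a_r}` iff it is increasing on each block
of positions `[a_{j-1}, a_j)`, i.e. on each fiber of the block-index function `b`. Each left coset
of the stabiliser `{g | b ∘ g = b}` contains exactly one such permutation (sort inside each
fiber), so `N(T) · ∏ c_j! = n!`. Deleting `a_i` from `T` merges the blocks of sizes `c_i` and
`c_{i+1}`, hence `N(T) = binom(c_i + c_{i+1}, c_i) · N(T \ {a_i})`; the permutations with
`Des(w) ⊆ T` and `a_i ∈ Des(w)` are those counted by `N(T)` but not by `N(T \ {a_i})`. Summing
over `i` counts the descents of all `w` with `Des(w) ⊆ T`.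
-/

open Polynomial

open scoped Classical

noncomputable section

open scoped Nat
open Finset Equiv

section Fibers

variable {α β γ : Type*} [LinearOrder α]

def StrictMonoOnFibers [Preorder γ] (b : α → β) (f : α → γ) : Prop :=
  ∀ c, StrictMonoOn f (b ⁻¹' {c})

variable [Fintype α] {b : α → β}

theorem eq_one_of_strictMonoOnFibers {w g : Perm α} (hw : StrictMonoOnFibers b w)
    (hwg : StrictMonoOnFibers b (w * g)) (hg : b ∘ g = b) : g = 1 := by
  have hgb (p : α) : b (g p) = b p := congrFun hg p
  ext p
  let gₚ : Perm {q // b q = b p} := g.subtypePerm fun q => by rw [hgb]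
  have hmono : StrictMono gₚ := fun x y hxy =>
    (hw (b p)).lt_iff_lt ((hgb x).trans x.2) ((hgb y).trans y.2) |>.1 (hwg (b p) x.2 y.2 hxy)
  exact congrArg Subtype.val (hmono.apply_eq (x := ⟨p, rfl⟩))

theorem exists_strictMonoOnFibers_mul (u : Perm α) :
    ∃ g : Perm α, b ∘ g = b ∧ StrictMonoOnFibers b ⇑(u * g) := by
  have hcard (c : β) : Fintype.card {p // b p = c} = Fintype.card {q // b (u⁻¹ q) = c} :=
    Fintype.card_congr (u.subtypeEquiv fun p => by simp)
  -- `w` matches each fiber of `b` increasingly with the fiber of `b ∘ u⁻¹` of the same size.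
  let e (c : β) : {p // b p = c} ≃o {q // b (u⁻¹ q) = c} :=
    (Fintype.orderIsoFinOfCardEq _ (hcard c)).symm.trans (Fintype.orderIsoFinOfCardEq _ rfl)
  let w : Perm α := Equiv.ofFiberEquiv fun c => (e c).toEquiv
  refine ⟨u⁻¹ * w, funext fun p => Equiv.ofFiberEquiv_map (g := b ∘ ⇑u⁻¹) _ p, ?_⟩
  rw [mul_inv_cancel_left]
  rintro c p (rfl : b p = c) q (hq : b q = b p) hpq
  have key (x : α) (c : β) (hx : b x = c) : w x = e c ⟨x, hx⟩ := by
    subst hx; rfl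
  rw [key p _ rfl, key q _ hq]
  exact (e (b p)).strictMono (Subtype.mk_lt_mk.2 hpq)

variable [DecidableEq β] in
theorem card_strictMonoOnFibers_mul_prod_factorial (s : Finset β) (hs : ∀ p, b p ∈ s) :
    #{w : Perm α | StrictMonoOnFibers b w} * ∏ c ∈ s, (#{p | b p = c})! =
      (Fintype.card α)! := by
  let μ : {w : Perm α // StrictMonoOnFibers b w} × {g : Perm α // b ∘ g = b} → Perm α :=
    fun x => x.1.1 * x.2.1
  have hμ : Function.Bijective μ := by
    constructor
    · rintro ⟨⟨w₁, hw₁⟩, ⟨g₁, hg₁⟩⟩ ⟨⟨w₂, hw₂⟩, ⟨g₂, hg₂⟩⟩ (h : w₁ * g₁ = w₂ * g₂)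
      have hw : w₁ = w₂ * (g₂ * g₁⁻¹) := by rw [← mul_assoc, ← h, mul_inv_cancel_right]
      have hg : g₂ * g₁⁻¹ = 1 := by
        refine eq_one_of_strictMonoOnFibers hw₂ (hw ▸ hw₁) ?_
        rw [Perm.coe_mul, ← Function.comp_assoc, hg₂]
        exact (g₁.comp_symm_eq b b).2 hg₁.symm
      obtain rfl : g₂ = g₁ := mul_inv_eq_one.1 hg
      obtain rfl : w₁ = w₂ := by simpa using hw
      rfl
    · intro u
      obtain ⟨g, hg, hug⟩ := exists_strictMonoOnFibers_mul (b := b) u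
      exact ⟨⟨⟨u * g, hug⟩, ⟨g⁻¹, (g.comp_symm_eq b b).2 hg.symm⟩⟩, mul_inv_cancel_right u g⟩
  have hstab : Fintype.card {g : Perm α // b ∘ g = b} = ∏ c ∈ s, (#{p | b p = c})! := by
    rw [DomMulAct.stabilizer_card']
    simp_rw [Fintype.card_subtype]
    refine prod_subset (image_subset_iff.2 fun p _ => hs p) fun c _ hc => ?_
    rw [filter_false_of_mem fun p _ (hp : b p = c) => hc (hp ▸ mem_image_of_mem b (mem_univ p)),
      card_empty, Nat.factorial_zero]
  rw [← hstab, ← Fintype.card_subtype, ← Fintype.card_prod, ← Fintype.card_perm,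
    Fintype.card_congr (Equiv.ofBijective μ hμ)]

end Fibers

section Descents

variable {n : ℕ}

-- The descent at `k` compares the positions `k - 1` and `k` (0-based), which lie in the same
-- block iff `k ∉ T`.
def blockIndex (T : Finset ℕ) (p : Fin n) : ℕ := #{t ∈ T | t ≤ (p : ℕ)}

theorem blockIndex_monotone (T : Finset ℕ) : Monotone (blockIndex (n := n) T) :=
  fun _ _ hpq => card_le_card <| monotone_filter_right T fun _ _ ht => ht.trans (Fin.le_def.1 hpq)

theorem blockIndex_of_covBy (T : Finset ℕ) {p q : Fin n} (hpq : p ⋖ q) :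
    blockIndex T q = blockIndex T p + if (q : ℕ) ∈ T then 1 else 0 := by
  have hq : (p : ℕ) + 1 = q := by simpa using hpq
  have hsplit : {t ∈ T | t ≤ (q : ℕ)} = {t ∈ T | t ≤ (p : ℕ)} ∪ {t ∈ T | t = q} := by
    rw [← filter_or]
    exact filter_congr fun t _ => by omega
  rw [blockIndex, hsplit, card_union_of_disjoint (disjoint_filter.2 fun _ _ h => by omega),
    filter_eq']
  split_ifs <;> rfl

theorem mem_descSet_iff {w : Perm (Fin n)} {k : ℕ} :
    k ∈ descSet w ↔ ∃ p q : Fin n, p ⋖ q ∧ (q : ℕ) = k ∧ w q < w p := by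
  simp only [descSet, mem_image, mem_filter, mem_univ, true_and, Fin.covBy_iff,
    Nat.covBy_iff_add_one_eq]
  constructor
  · rintro ⟨i, hi, rfl⟩
    exact ⟨_, _, rfl, rfl, hi⟩
  · rintro ⟨p, q, hpq, rfl, hlt⟩
    refine ⟨⟨p, by omega⟩, ?_, hpq⟩
    convert hlt using 2
    exact Fin.ext hpq

theorem val_mem_descSet_iff_of_covBy {w : Perm (Fin n)} {p q : Fin n} (hpq : p ⋖ q) :
    (q : ℕ) ∈ descSet w ↔ w q < w p := by
  rw [mem_descSet_iff]
  constructor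
  · rintro ⟨p', q', hpq', hq, hlt⟩
    obtain rfl : q' = q := Fin.ext hq
    rwa [hpq'.unique_left hpq] at hlt
  · exact fun hlt => ⟨p, q, hpq, rfl, hlt⟩

theorem descSet_subset_iff_strictMonoOnFibers (T : Finset ℕ) (w : Perm (Fin n)) :
    descSet w ⊆ T ↔ StrictMonoOnFibers (blockIndex T) w := by
  constructor
  · intro hT c
    refine strictMonoOn_of_lt_succ
      (Set.ordConnected_singleton.preimage_mono (blockIndex_monotone T)) fun p hp hpc hsc => ?_
    have hcov := Order.covBy_succ_of_not_isMax hp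
    have hnotT : ((Order.succ p : Fin n) : ℕ) ∉ T := fun hmem => by
      have := blockIndex_of_covBy T hcov
      rw [if_pos hmem, (hsc : _ = c), (hpc : _ = c)] at this
      omega
    have hnotD : ¬ w (Order.succ p) < w p := fun hlt =>
      hnotT (hT ((val_mem_descSet_iff_of_covBy hcov).2 hlt))
    exact (not_lt.1 hnotD).lt_of_ne (w.injective.ne hcov.lt.ne)
  · intro h k hk
    obtain ⟨p, q, hpq, rfl, hlt⟩ := mem_descSet_iff.1 hk
    by_contra hq
    have hb : blockIndex T q = blockIndex T p := by simp [blockIndex_of_covBy T hpq, hq]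
    exact lt_asymm hlt (h _ rfl hb hpq.lt)

theorem card_descSet_subset_and_mem_add_card_erase (T : Finset ℕ) (x : ℕ) :
    #{w : Perm (Fin n) | descSet w ⊆ T ∧ x ∈ descSet w} +
        #{w : Perm (Fin n) | descSet w ⊆ T.erase x} =
      #{w : Perm (Fin n) | descSet w ⊆ T} := by
  simp_rw [subset_erase, ← filter_filter]
  exact card_filter_add_card_filter_not _

theorem sum_card_descSet_eq_sum_card_mem (T : Finset ℕ) :
    ∑ w ∈ {w : Perm (Fin n) | descSet w ⊆ T}, #(descSet w) =
      ∑ t ∈ T, #{w : Perm (Fin n) | descSet w ⊆ T ∧ t ∈ descSet w} := by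
  calc ∑ w ∈ {w : Perm (Fin n) | descSet w ⊆ T}, #(descSet w)
      = ∑ w ∈ {w : Perm (Fin n) | descSet w ⊆ T},
          #(T.bipartiteAbove (fun w t => t ∈ descSet w) w) :=
        sum_congr rfl fun w hw => by
          rw [bipartiteAbove, filter_mem_eq_inter, inter_eq_right.2 (mem_filter.1 hw).2]
    _ = _ := sum_card_bipartiteAbove_eq_sum_card_bipartiteBelow _
    _ = _ := by simp only [bipartiteBelow, filter_filter]

end Descents

section Compositions

variable {n r : ℕ} {a : ℕ → ℕ}

theorem Fin.card_filter_le_val_and_val_lt {lo hi : ℕ} (h : hi ≤ n) :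
    #{p : Fin n | lo ≤ (p : ℕ) ∧ (p : ℕ) < hi} = hi - lo := by
  rw [← Nat.card_Ico, ← card_map Fin.valEmbedding]
  congr 1
  ext x
  simp only [mem_map, mem_filter, mem_univ, true_and, Fin.valEmbedding_apply, Fin.exists_iff,
    exists_and_left, exists_prop, exists_eq_right_right, mem_Ico, and_iff_left_iff_imp, and_imp]
  omega

theorem StrictMonoOn.injOn_Icc_one (ha : StrictMonoOn a (Set.Iic (r + 1))) :
    Set.InjOn a (Icc 1 r) :=
  ha.injOn.mono fun _ hs => Set.mem_Iic.2 ((mem_Icc.1 (mem_coe.1 hs)).2.trans r.le_succ)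

theorem blockIndex_image (ha : Set.InjOn a (Icc 1 r)) (p : Fin n) :
    blockIndex ((Icc 1 r).image a) p = #{s ∈ Icc 1 r | a s ≤ p} := by
  rw [blockIndex, filter_image, card_image_of_injOn (ha.mono (filter_subset _ _))]

theorem le_blockIndex_image_iff (ha : StrictMonoOn a (Set.Iic (r + 1))) (ha0 : a 0 = 0)
    (han : a (r + 1) = n) {j : ℕ} (hj : j ≤ r + 1) (p : Fin n) :
    j ≤ blockIndex ((Icc 1 r).image a) p ↔ a j ≤ p := by
  have hmem {s : ℕ} (hs : s ≤ r + 1) : s ∈ Set.Iic (r + 1) := hs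
  rw [blockIndex_image ha.injOn_Icc_one]
  constructor
  · intro hjp
    by_contra! hpj
    have hsub : {s ∈ Icc 1 r | a s ≤ p} ⊆ Icc 1 (j - 1) := fun s hs => by
      simp only [mem_filter, mem_Icc] at hs ⊢
      have : s < j := (ha.lt_iff_lt (hmem (by omega)) (hmem hj)).1 (by omega)
      omega
    have := card_le_card hsub
    rw [Nat.card_Icc] at this
    have : j ≠ 0 := by rintro rfl; omega
    omega
  · intro hpj
    have hjr : j ≤ r := by
      by_contra! hjr
      obtain rfl : j = r + 1 := by omega
      omega
    have hsub : Icc 1 j ⊆ {s ∈ Icc 1 r | a s ≤ p} := fun s hs => by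
      simp only [mem_filter, mem_Icc] at hs ⊢
      exact ⟨⟨hs.1, by omega⟩, (ha.le_iff_le (hmem (by omega)) (hmem hj)).2 hs.2 |>.trans hpj⟩
    simpa using card_le_card hsub

theorem blockIndex_image_eq_iff (ha : StrictMonoOn a (Set.Iic (r + 1))) (ha0 : a 0 = 0)
    (han : a (r + 1) = n) {j : ℕ} (hj : j ≤ r) (p : Fin n) :
    blockIndex ((Icc 1 r).image a) p = j ↔ a j ≤ p ∧ p < a (j + 1) := by
  rw [← le_blockIndex_image_iff ha ha0 han (by omega), ← not_le,
    ← le_blockIndex_image_iff ha ha0 han (by omega)]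
  omega

theorem card_descSet_subset_mul_prod_factorial (ha : StrictMonoOn a (Set.Iic (r + 1)))
    (ha0 : a 0 = 0) (han : a (r + 1) = n) :
    #{w : Perm (Fin n) | descSet w ⊆ (Icc 1 r).image a} *
      ∏ j ∈ range (r + 1), (a (j + 1) - a j)! = n ! := by
  have hrange (p : Fin n) : blockIndex ((Icc 1 r).image a) p ∈ range (r + 1) := by
    rw [mem_range, Nat.lt_succ_iff, ← not_lt, Nat.lt_iff_add_one_le,
      le_blockIndex_image_iff ha ha0 han le_rfl, han, not_le]
    exact p.isLt
  have hfiber {j : ℕ} (hj : j ∈ range (r + 1)) :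
      #{p : Fin n | blockIndex ((Icc 1 r).image a) p = j} = a (j + 1) - a j := by
    rw [mem_range] at hj
    simp_rw [blockIndex_image_eq_iff ha ha0 han (Nat.lt_succ_iff.1 hj)]
    exact Fin.card_filter_le_val_and_val_lt <| han ▸
      ha.monotoneOn (Set.mem_Iic.2 (by omega)) (Set.mem_Iic.2 le_rfl) (by omega)
  simp_rw [descSet_subset_iff_strictMonoOnFibers]
  rw [← prod_congr rfl fun j hj => congrArg Nat.factorial (hfiber hj),
    card_strictMonoOnFibers_mul_prod_factorial _ hrange, Fintype.card_fin]

end Compositions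

section EraseIdx

variable {r : ℕ} {a : ℕ → ℕ}

def eraseIdx (a : ℕ → ℕ) (i j : ℕ) : ℕ := a (if j < i then j else j + 1)

theorem StrictMonoOn.eraseIdx (ha : StrictMonoOn a (Set.Iic (r + 1))) (i : ℕ) :
    StrictMonoOn (eraseIdx a i) (Set.Iic r) := fun s hs t ht hst => by
  simp only [Set.mem_Iic] at hs ht
  refine ha (Set.mem_Iic.2 ?_) (Set.mem_Iic.2 ?_) ?_ <;> split_ifs <;> omega

theorem image_eraseIdx (ha : Set.InjOn a (Icc 1 (r + 1))) {i : ℕ} (hi : i ∈ Icc 1 (r + 1)) :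
    (Icc 1 r).image (eraseIdx a i) = ((Icc 1 (r + 1)).image a).erase (a i) := by
  rw [mem_Icc] at hi
  ext x
  simp only [mem_erase, mem_image, mem_Icc, eraseIdx]
  constructor
  · rintro ⟨s, hs, rfl⟩
    refine ⟨fun h => ?_, _, by split_ifs <;> omega, rfl⟩
    have := ha (mem_coe.2 (mem_Icc.2 (by split_ifs <;> omega))) (mem_coe.2 (mem_Icc.2 hi)) h
    split_ifs at this <;> omega
  · rintro ⟨hne, t, ht, rfl⟩
    have hti : t ≠ i := by rintro rfl; exact hne rfl
    refine ⟨if t < i then t else t - 1, by split_ifs <;> omega, ?_⟩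
    congr 1
    split_ifs <;> omega

theorem prod_factorial_gaps_eraseIdx {i : ℕ} (hi : i ∈ Icc 1 (r + 1)) :
    (∏ j ∈ range (r + 1), (eraseIdx a i (j + 1) - eraseIdx a i j)!) *
        ((a i - a (i - 1))! * (a (i + 1) - a i)!) =
      (a (i + 1) - a (i - 1))! * ∏ j ∈ range (r + 2), (a (j + 1) - a j)! := by
  obtain ⟨hi₁, hir⟩ := mem_Icc.1 hi
  obtain ⟨m, rfl⟩ : ∃ m, i = m + 1 := ⟨i - 1, by omega⟩
  obtain ⟨k, rfl⟩ : ∃ k, r = m + k := ⟨r - m, by omega⟩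
  set f : ℕ → ℕ := fun j => (a (j + 1) - a j)!
  have hlow : ∏ j ∈ range m, (eraseIdx a (m + 1) (j + 1) - eraseIdx a (m + 1) j)! =
      ∏ j ∈ range m, f j :=
    prod_congr rfl fun j hj => by
      rw [mem_range] at hj
      simp only [eraseIdx, f, if_pos (hj.trans (lt_add_one m)), if_pos (Nat.add_lt_add_right hj 1)]
  have hhigh (x : ℕ) : (eraseIdx a (m + 1) (m + 1 + x + 1) - eraseIdx a (m + 1) (m + 1 + x))! =
      f (m + 2 + x) := by
    simp only [eraseIdx, f, if_neg (show ¬ m + 1 + x < m + 1 by omega),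
      if_neg (show ¬ m + 1 + x + 1 < m + 1 by omega)]
    ring_nf
  rw [show m + k + 1 = m + 1 + k by omega, prod_range_add, prod_range_succ, hlow,
    prod_congr rfl fun x _ => hhigh x, show m + k + 2 = m + 2 + k by omega,
    prod_range_add (n := m + 2), prod_range_succ, prod_range_succ]
  simp only [eraseIdx, lt_add_one, if_true, lt_irrefl, if_false, Nat.add_sub_cancel, f]
  ring

end EraseIdx

section Removal

variable {n r : ℕ} {a : ℕ → ℕ}

theorem card_descSet_subset_eq_choose_mul (ha : StrictMonoOn a (Set.Iic (r + 1)))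
    (ha0 : a 0 = 0) (han : a (r + 1) = n) {i : ℕ} (hi : i ∈ Icc 1 r) :
    #{w : Perm (Fin n) | descSet w ⊆ (Icc 1 r).image a} =
      ((a i - a (i - 1)) + (a (i + 1) - a i)).choose (a i - a (i - 1)) *
        #{w : Perm (Fin n) | descSet w ⊆ ((Icc 1 r).image a).erase (a i)} := by
  obtain ⟨hi₁, hir⟩ := mem_Icc.1 hi
  obtain ⟨r, rfl⟩ : ∃ r', r = r' + 1 := ⟨r - 1, by omega⟩
  have hgap : a (i + 1) - a (i - 1) = (a i - a (i - 1)) + (a (i + 1) - a i) := by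
    have h₁ := ha (Set.mem_Iic.2 (by omega)) (Set.mem_Iic.2 (by omega)) (Nat.sub_lt hi₁ one_pos)
    have h₂ := ha (Set.mem_Iic.2 (by omega)) (Set.mem_Iic.2 (by omega)) (lt_add_one i)
    omega
  have hN := card_descSet_subset_mul_prod_factorial ha ha0 han
  have ha0' : eraseIdx a i 0 = 0 := by rw [eraseIdx, if_pos (by omega), ha0]
  have han' : eraseIdx a i (r + 1) = n := by rw [eraseIdx, if_neg (by omega), han]
  have hN' := card_descSet_subset_mul_prod_factorial (ha.eraseIdx i) ha0' han'
  rw [image_eraseIdx ha.injOn_Icc_one hi] at hN'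
  have hprod := prod_factorial_gaps_eraseIdx (a := a) hi
  rw [hgap, ← Nat.add_choose_mul_factorial_mul_factorial, ← Nat.choose_symm_add] at hprod
  refine Nat.eq_of_mul_eq_mul_right (m := (∏ j ∈ range (r + 2), (a (j + 1) - a j)!) *
    ((a i - a (i - 1))! * (a (i + 1) - a i)!)) (by positivity) ?_
  rw [← mul_assoc, hN, ← hN', mul_assoc, hprod]
  ring

theorem card_descSet_subset_and_mem (ha : StrictMonoOn a (Set.Iic (r + 1))) (ha0 : a 0 = 0)
    (han : a (r + 1) = n) {i : ℕ} (hi : i ∈ Icc 1 r) :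
    (#{w : Perm (Fin n) | descSet w ⊆ (Icc 1 r).image a ∧ a i ∈ descSet w} : ℝ) =
      #{w : Perm (Fin n) | descSet w ⊆ (Icc 1 r).image a} *
        (1 - ((((a i - a (i - 1)) + (a (i + 1) - a i)).choose (a i - a (i - 1)) : ℝ))⁻¹) := by
  have hsplit : (#{w : Perm (Fin n) | descSet w ⊆ (Icc 1 r).image a ∧ a i ∈ descSet w} : ℝ) +
      #{w : Perm (Fin n) | descSet w ⊆ ((Icc 1 r).image a).erase (a i)} =
        #{w : Perm (Fin n) | descSet w ⊆ (Icc 1 r).image a} := by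
    exact_mod_cast card_descSet_subset_and_mem_add_card_erase _ _
  have hpos : 0 < ((a i - a (i - 1)) + (a (i + 1) - a i)).choose (a i - a (i - 1)) :=
    Nat.choose_pos (Nat.le_add_right _ _)
  rw [eq_sub_of_add_eq hsplit, card_descSet_subset_eq_choose_mul ha ha0 han hi]
  push_cast
  field_simp

end Removal

theorem stmt6_general (n r : ℕ) (a : ℕ → ℕ) (ha0 : a 0 = 0) (han : a (r + 1) = n)
    (hinc : ∀ i ≤ r, a i < a (i + 1)) (T : Finset ℕ) (hT : T = (Finset.Icc 1 r).image a) :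
    (∑ w ∈ Finset.univ.filter (fun w : Equiv.Perm (Fin n) => descSet w ⊆ T),
        ((descSet w).card : ℝ)) =
      ((Finset.univ.filter (fun w : Equiv.Perm (Fin n) => descSet w ⊆ T)).card : ℝ) *
        ((r : ℝ) - ∑ i ∈ Finset.Icc 1 r,
          ((((a i - a (i - 1)) + (a (i + 1) - a i)).choose (a i - a (i - 1)) : ℝ))⁻¹) ∧
    ∀ i ∈ Finset.Icc 1 r,
      ((Finset.univ.filter (fun w : Equiv.Perm (Fin n) =>
          descSet w ⊆ T ∧ a i ∈ descSet w)).card : ℝ) =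
        ((Finset.univ.filter (fun w : Equiv.Perm (Fin n) => descSet w ⊆ T)).card : ℝ) *
          (1 - ((((a i - a (i - 1)) + (a (i + 1) - a i)).choose (a i - a (i - 1)) : ℝ))⁻¹) := by
  subst hT
  have ha : StrictMonoOn a (Set.Iic (r + 1)) :=
    strictMonoOn_Iic_of_lt_succ fun j hj => by simpa using hinc j (Nat.lt_succ_iff.1 hj)
  have hmem (i : ℕ) (hi : i ∈ Icc 1 r) := card_descSet_subset_and_mem (n := n) ha ha0 han hi
  refine ⟨?_, hmem⟩
  rw [← Nat.cast_sum, sum_card_descSet_eq_sum_card_mem, sum_image ha.injOn_Icc_one, Nat.cast_sum,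
    sum_congr rfl hmem, ← mul_sum, sum_sub_distrib, sum_const, Nat.card_Icc]
  simp

/-- Let `T = {a_1 < ⋯ < a_r} ⊆ [n-1]`, with `a_0 = 0`, `a_{r+1} = n`
and `c_i = a_i - a_{i-1}`.  If `N = #{w ∈ S_n : Des(w) ⊆ T}` then
`Σ_{w : Des(w) ⊆ T} des(w) = N·(r - Σ_{i=1}^r binom(c_i + c_{i+1}, c_i)⁻¹)`, and
for each `i ∈ [r]` the number of `w ∈ S_n` with `Des(w) ⊆ T` and `a_i ∈ Des(w)`
equals `N·(1 - binom(c_i + c_{i+1}, c_i)⁻¹)`. -/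
theorem stmt6 (n r : ℕ) (hn : 0 < n) (a : ℕ → ℕ) (ha0 : a 0 = 0) (han : a (r + 1) = n)
    (hinc : ∀ i ≤ r, a i < a (i + 1)) (T : Finset ℕ) (hT : T = (Finset.Icc 1 r).image a) :
    (∑ w ∈ Finset.univ.filter (fun w : Equiv.Perm (Fin n) => descSet w ⊆ T),
        ((descSet w).card : ℝ)) =
      ((Finset.univ.filter (fun w : Equiv.Perm (Fin n) => descSet w ⊆ T)).card : ℝ) *
        ((r : ℝ) - ∑ i ∈ Finset.Icc 1 r,
          ((((a i - a (i - 1)) + (a (i + 1) - a i)).choose (a i - a (i - 1)) : ℝ))⁻¹) ∧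
    ∀ i ∈ Finset.Icc 1 r,
      ((Finset.univ.filter (fun w : Equiv.Perm (Fin n) =>
          descSet w ⊆ T ∧ a i ∈ descSet w)).card : ℝ) =
        ((Finset.univ.filter (fun w : Equiv.Perm (Fin n) => descSet w ⊆ T)).card : ℝ) *
          (1 - ((((a i - a (i - 1)) + (a (i + 1) - a i)).choose (a i - a (i - 1)) : ℝ))⁻¹) :=
  stmt6_general n r a ha0 han hinc T hT
end
end

section
/- Let n be a positive integer, 0 ≤ r ≤ n-1, and T = [r] = {1,2,...,r} ⊆ [n-1]. Then A^T_n(x) = Σ_{i=0}^r binom(n-r+i-1, i) · p_{r,i}(x), where p_{r,i}(x) = Σ x^{des(w)} summed over all permutations w ∈ S_{r+1} with w(1) = i+1. -/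
open Polynomial

open scoped Classical

noncomputable section

/-!
A permutation `w ∈ S_n` has `Des(w) ⊆ [r]` iff it increases from position `r + 1` on. Such a `w`
is determined by the set `S` of its first `r + 1` values together with the pattern `u ∈ S_{r+1}`
in which they appear (the tail lists `Sᶜ` increasingly), and `des w = des u`. A pair `(u, S)`
arises this way iff `w(r+1)`, the `u(r+1)`-th smallest element of `S`, lies below all of `Sᶜ`,
i.e. iff `S ⊇ {1, …, u(r+1)}`; for fixed `u` there are `binom(n - u(r+1), r + 1 - u(r+1))` such
sets. Conjugating `u` by the reversal preserves `des` and sends `u(r+1)` to `r + 2 - u(1)`, which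
turns this count into `binom(n - r + i - 1, i)` for `u(1) = i + 1`. (Positions and values are
1-based here and `Fin`-indexed from `0` below; `descSet` records descents 1-based.)
-/

open Finset Equiv

namespace Finset

variable {n m : ℕ} {S : Finset (Fin n)}

theorem card_compl_eq_sub (hS : #S = m) : #Sᶜ = n - m := by
  rw [card_compl, hS, Fintype.card_fin]

theorem le_orderEmbOfFin (hS : #S = m) (k : Fin m) : (k : ℕ) ≤ S.orderEmbOfFin hS k := by
  have := card_le_card_of_injOn (S.orderEmbOfFin hS) (s := Iio k) (t := Iio (S.orderEmbOfFin hS k))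
    (fun t ht => by simpa using ht) (S.orderEmbOfFin hS).injective.injOn
  simpa using this

theorem orderEmbOfFin_eq_castLE_of_Iic_subset (hS : #S = m) (hmn : m ≤ n) {k : Fin m}
    (hk : Iic (Fin.castLE hmn k) ⊆ S) : S.orderEmbOfFin hS k = Fin.castLE hmn k := by
  refine le_antisymm (not_lt.mp fun hlt => ?_) (Fin.le_def.mpr (le_orderEmbOfFin hS k))
  have hsub : Iic (Fin.castLE hmn k) ⊆ (Iio k).image (S.orderEmbOfFin hS) := by
    intro x hx
    obtain ⟨t, rfl⟩ : x ∈ Set.range (S.orderEmbOfFin hS) := by simpa using hk hx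
    exact mem_image_of_mem _ (mem_Iio.mpr ((S.orderEmbOfFin hS).lt_iff_lt.mp
      (lt_of_le_of_lt (mem_Iic.mp hx) hlt)))
  have := (card_le_card hsub).trans card_image_le
  simp at this

end Finset

variable {n r : ℕ}

theorem mem_descSet_s9 {w : Perm (Fin n)} {j : ℕ} :
    j ∈ descSet w ↔ ∃ h : 0 < j ∧ j < n, w ⟨j, h.2⟩ < w ⟨j - 1, by omega⟩ := by
  simp only [descSet, mem_image, mem_filter, mem_univ, true_and]
  constructor
  · rintro ⟨i, hi, rfl⟩
    exact ⟨⟨by omega, by omega⟩, by simpa using hi⟩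
  · rintro ⟨hj, h⟩
    refine ⟨⟨j - 1, by omega⟩, ?_, Nat.sub_add_cancel hj.1⟩
    simpa [Nat.sub_add_cancel hj.1] using h

theorem mem_descSet_permCongr_revPerm {u : Perm (Fin n)} {j : ℕ} :
    j ∈ descSet (Fin.revPerm.permCongr u) ↔ n - j ∈ descSet u := by
  simp only [mem_descSet_s9, permCongr_apply, Fin.revPerm_symm, Fin.revPerm_apply, Fin.rev_lt_rev]
  constructor
  · rintro ⟨hj, h⟩
    refine ⟨⟨by omega, by omega⟩, ?_⟩
    convert h using 2 <;> ext <;> simp only [Fin.val_rev] <;> omega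
  · rintro ⟨hj, h⟩
    refine ⟨⟨by omega, by omega⟩, ?_⟩
    convert h using 2 <;> ext <;> simp only [Fin.val_rev] <;> omega

theorem card_descSet_permCongr_revPerm (u : Perm (Fin n)) :
    #(descSet (Fin.revPerm.permCongr u)) = #(descSet u) := by
  have lt_of_mem {v : Perm (Fin n)} {j : ℕ} (hj : j ∈ descSet v) : j < n :=
    (mem_descSet_s9.mp hj).1.2
  refine card_nbij' (n - ·) (n - ·) (fun j hj => mem_descSet_permCongr_revPerm.mp hj)
    (fun j hj => mem_descSet_permCongr_revPerm.mpr ?_) (fun j hj => ?_) (fun j hj => ?_)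
  · rwa [Nat.sub_sub_self (lt_of_mem hj).le]
  · have := lt_of_mem (mem_descSet_permCongr_revPerm.mp hj)
    have := lt_of_mem hj
    simp only; omega
  · have := lt_of_mem hj
    simp only; omega

theorem descSet_subset_Icc_pred (u : Perm (Fin n)) : descSet u ⊆ Icc 1 (n - 1) := fun j hj => by
  obtain ⟨hj, -⟩ := mem_descSet_s9.mp hj
  exact mem_Icc.mpr ⟨hj.1, by omega⟩

theorem apply_lt_apply_succ_of_descSet_subset_Icc {w : Perm (Fin n)}
    (hw : descSet w ⊆ Icc 1 r) {j : ℕ} (hj : j + 1 < n) (hrj : r ≤ j) :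
    w ⟨j, by omega⟩ < w ⟨j + 1, hj⟩ := by
  refine lt_of_le_of_ne (not_lt.mp fun hlt => ?_) (fun h => by simpa using w.injective h)
  have := mem_Icc.mp (hw (mem_descSet_s9.mpr ⟨⟨by omega, hj⟩, by simpa using hlt⟩))
  omega

theorem apply_lt_apply_of_descSet_subset_Icc {w : Perm (Fin n)}
    (hw : descSet w ⊆ Icc 1 r) {p q : Fin n} (hp : r ≤ p) (hpq : p < q) : w p < w q := by
  obtain ⟨p, hpn⟩ := p
  obtain ⟨q, hqn⟩ := q
  simp only at hp
  rw [Fin.mk_lt_mk] at hpq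
  induction q, hpq using Nat.le_induction with
  | base => exact apply_lt_apply_succ_of_descSet_subset_Icc hw hqn hp
  | succ q hpq ih =>
    exact (ih (by omega)).trans (apply_lt_apply_succ_of_descSet_subset_Icc hw hqn (by omega))

section OfPrefix

variable (hrn : r < n)

def ofPrefix (u : Perm (Fin (r + 1))) (S : Finset (Fin n)) (hS : #S = r + 1) : Perm (Fin n) :=
  (finCongr (by omega : n = r + 1 + (n - (r + 1)))).trans <|
    finSumFinEquiv.symm.trans <|
      (Equiv.sumCongr (u.trans (S.orderIsoOfFin hS).toEquiv)
        ((Sᶜ.orderIsoOfFin (card_compl_eq_sub hS)).toEquiv.trans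
          (Equiv.subtypeEquivRight fun _ => mem_compl))).trans
      (Equiv.sumCompl (· ∈ S))

variable {hrn} {u : Perm (Fin (r + 1))} {S : Finset (Fin n)} {hS : #S = r + 1}

theorem ofPrefix_apply_of_lt {p : Fin n} (hp : (p : ℕ) < r + 1) :
    ofPrefix hrn u S hS p = S.orderEmbOfFin hS (u ⟨p, hp⟩) := by
  have : finCongr (by omega : n = r + 1 + (n - (r + 1))) p = Fin.castAdd _ ⟨p, hp⟩ := rfl
  rw [ofPrefix, trans_apply, this, trans_apply, finSumFinEquiv_symm_apply_castAdd]
  simp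

theorem ofPrefix_apply_of_le {p : Fin n} (hp : r + 1 ≤ (p : ℕ)) :
    ofPrefix hrn u S hS p =
      Sᶜ.orderEmbOfFin (card_compl_eq_sub hS) ⟨p - (r + 1), by omega⟩ := by
  have : finCongr (by omega : n = r + 1 + (n - (r + 1))) p =
      Fin.natAdd (r + 1) ⟨p - (r + 1), by omega⟩ := by
    ext
    simp only [finCongr_apply, Fin.val_cast, Fin.natAdd_mk]
    omega
  rw [ofPrefix, trans_apply, this, trans_apply, finSumFinEquiv_symm_apply_natAdd]
  simp

theorem ofPrefix_lt_ofPrefix (hIic : Iic (Fin.castLE hrn (u (Fin.last r))) ⊆ S) {p q : Fin n}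
    (hp : r ≤ (p : ℕ)) (hpq : p < q) : ofPrefix hrn u S hS p < ofPrefix hrn u S hS q := by
  have hq : r + 1 ≤ (q : ℕ) := by rw [Fin.lt_def] at hpq; omega
  rw [ofPrefix_apply_of_le hq]
  rcases hp.eq_or_lt with hpr | hpr
  · have hlast : (⟨p, by omega⟩ : Fin (r + 1)) = Fin.last r := Fin.ext hpr.symm
    rw [ofPrefix_apply_of_lt (by omega), hlast, orderEmbOfFin_eq_castLE_of_Iic_subset hS hrn hIic]
    exact not_le.mp fun hle => mem_compl.mp (orderEmbOfFin_mem _ _ _) (hIic (mem_Iic.mpr hle))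
  · rw [ofPrefix_apply_of_le hpr, OrderEmbedding.lt_iff_lt, Fin.mk_lt_mk]
    rw [Fin.lt_def] at hpq
    omega

theorem ofPrefix_lt_ofPrefix_iff {p q : Fin n} (hp : (p : ℕ) < r + 1) (hq : (q : ℕ) < r + 1) :
    ofPrefix hrn u S hS p < ofPrefix hrn u S hS q ↔ u ⟨p, hp⟩ < u ⟨q, hq⟩ := by
  rw [ofPrefix_apply_of_lt hp, ofPrefix_apply_of_lt hq, OrderEmbedding.lt_iff_lt]

theorem descSet_ofPrefix (hIic : Iic (Fin.castLE hrn (u (Fin.last r))) ⊆ S) :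
    descSet (ofPrefix hrn u S hS) = descSet u := by
  ext j
  rw [mem_descSet_s9, mem_descSet_s9]
  by_cases hj : j < r + 1
  · have hj' : j - 1 < r + 1 := by omega
    constructor
    · rintro ⟨h, hlt⟩
      exact ⟨⟨h.1, hj⟩, (ofPrefix_lt_ofPrefix_iff (by exact hj) (by exact hj')).mp hlt⟩
    · rintro ⟨h, hlt⟩
      exact ⟨⟨h.1, h.2.trans_le hrn⟩,
        (ofPrefix_lt_ofPrefix_iff (by exact hj) (by exact hj')).mpr hlt⟩
  · refine iff_of_false (fun ⟨h, hlt⟩ => ?_) (fun ⟨h, _⟩ => hj h.2)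
    exact (ofPrefix_lt_ofPrefix hIic (show r ≤ j - 1 by omega)
      (Fin.mk_lt_mk.mpr (by omega))).not_gt hlt

end OfPrefix

section Prefix

variable (hrn : r < n) (w : Perm (Fin n))

def prefixValues : Finset (Fin n) :=
  univ.image (w ∘ Fin.castLE hrn)

theorem card_prefixValues : #(prefixValues hrn w) = r + 1 := by
  rw [prefixValues, card_image_of_injective _ (w.injective.comp (Fin.castLE_injective hrn)),
    card_univ, Fintype.card_fin]

theorem apply_castLE_mem_prefixValues (k : Fin (r + 1)) :
    w (Fin.castLE hrn k) ∈ prefixValues hrn w :=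
  mem_image_of_mem _ (mem_univ k)

def prefixPattern : Perm (Fin (r + 1)) :=
  Equiv.ofBijective
    (fun k => ((prefixValues hrn w).orderIsoOfFin (card_prefixValues hrn w)).symm
      ⟨w (Fin.castLE hrn k), apply_castLE_mem_prefixValues hrn w k⟩)
    (Finite.injective_iff_bijective.mp fun a b hab => by
      simpa using (OrderIso.injective _ hab))

theorem orderEmbOfFin_prefixPattern (k : Fin (r + 1)) :
    (prefixValues hrn w).orderEmbOfFin (card_prefixValues hrn w) (prefixPattern hrn w k) =
      w (Fin.castLE hrn k) := by
  rw [← coe_orderIsoOfFin_apply, prefixPattern, ofBijective_apply, OrderIso.apply_symm_apply]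

end Prefix

section Decomposition

variable {hrn : r < n}

theorem prefixValues_ofPrefix (u : Perm (Fin (r + 1))) (S : Finset (Fin n)) (hS : #S = r + 1) :
    prefixValues hrn (ofPrefix hrn u S hS) = S := by
  have : ofPrefix hrn u S hS ∘ Fin.castLE hrn = S.orderEmbOfFin hS ∘ u :=
    funext fun k => ofPrefix_apply_of_lt (p := Fin.castLE hrn k) k.isLt
  rw [prefixValues, this, ← image_image, image_univ_equiv, image_orderEmbOfFin_univ]

theorem prefixPattern_ofPrefix (u : Perm (Fin (r + 1))) (S : Finset (Fin n)) (hS : #S = r + 1) :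
    prefixPattern hrn (ofPrefix hrn u S hS) = u := by
  refine Equiv.ext fun k => ?_
  have h := orderEmbOfFin_prefixPattern hrn (ofPrefix hrn u S hS) k
  rw [ofPrefix_apply_of_lt (p := Fin.castLE hrn k) k.isLt] at h
  simp only [prefixValues_ofPrefix] at h
  exact (S.orderEmbOfFin hS).injective h

variable {w : Perm (Fin n)}

theorem apply_notMem_prefixValues {q : Fin n} (hq : r + 1 ≤ (q : ℕ)) :
    w q ∉ prefixValues hrn w := by
  simp only [prefixValues, mem_image, mem_univ, true_and, Function.comp_apply, not_exists]
  intro k hk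
  have := congrArg Fin.val (w.injective hk)
  simp only [Fin.val_castLE] at this
  omega

theorem ofPrefix_prefixPattern (hw : descSet w ⊆ Icc 1 r) :
    ofPrefix hrn (prefixPattern hrn w) (prefixValues hrn w) (card_prefixValues hrn w) = w := by
  refine Equiv.ext fun p => ?_
  by_cases hp : (p : ℕ) < r + 1
  · rw [ofPrefix_apply_of_lt hp, orderEmbOfFin_prefixPattern]
    rfl
  · rw [ofPrefix_apply_of_le (not_lt.mp hp)]
    let tail : Fin (n - (r + 1)) → Fin n := fun t => w ⟨t + (r + 1), by omega⟩
    have htail : tail = _ := orderEmbOfFin_unique (card_compl_eq_sub (card_prefixValues hrn w))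
      (fun t => mem_compl.mpr (apply_notMem_prefixValues (by simp)))
      (fun a b hab => apply_lt_apply_of_descSet_subset_Icc hw (by simp only; omega)
        (Fin.mk_lt_mk.mpr (by rw [Fin.lt_def] at hab; omega)))
    rw [← htail]
    exact congrArg w (Fin.ext (by simp only; omega))

theorem Iic_subset_prefixValues (hw : descSet w ⊆ Icc 1 r) :
    Iic (Fin.castLE hrn (prefixPattern hrn w (Fin.last r))) ⊆ prefixValues hrn w := by
  intro x hx
  by_contra hxS
  have hq : r + 1 ≤ (w.symm x : ℕ) := not_lt.mp fun hlt => hxS <| by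
    simpa using apply_castLE_mem_prefixValues hrn w ⟨w.symm x, hlt⟩
  have hlt := apply_lt_apply_of_descSet_subset_Icc hw (p := Fin.castLE hrn (Fin.last r))
    (q := w.symm x) (by simp) (Fin.lt_def.mpr (by simp only [Fin.val_castLE, Fin.val_last]; omega))
  rw [← orderEmbOfFin_prefixPattern, apply_symm_apply, Fin.lt_def] at hlt
  have := le_orderEmbOfFin (card_prefixValues hrn w) (prefixPattern hrn w (Fin.last r))
  have := Fin.le_def.mp (mem_Iic.mp hx)
  simp only [Fin.val_castLE] at this
  omega

end Decomposition

theorem sum_apply_last_eq_sum_rev_apply_zero {M : Type*} [AddCommMonoid M] {m : ℕ}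
    (f : Fin (m + 1) → ℕ → M) :
    ∑ u : Perm (Fin (m + 1)), f (u (Fin.last m)) #(descSet u) =
      ∑ u : Perm (Fin (m + 1)), f (u 0).rev #(descSet u) := by
  rw [← (Fin.revPerm.permCongr).sum_comp]
  simp only [permCongr_apply, Fin.revPerm_symm, Fin.revPerm_apply, Fin.rev_last,
    card_descSet_permCongr_revPerm]

theorem sum_C_mul_ppoly_Icc (f : ℕ → ℝ) :
    ∑ i ∈ range (r + 1), C (f i) * ppoly r i (Icc 1 r) =
      ∑ u : Perm (Fin (r + 1)), C (f (u 0)) * X ^ #(descSet u) := by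
  have hppoly (i : ℕ) : ppoly r i (Icc 1 r) =
      ∑ u ∈ univ.filter fun u : Perm (Fin (r + 1)) => (u 0 : ℕ) = i, X ^ #(descSet u) := by
    refine sum_congr (filter_congr fun u _ => ?_) fun _ _ => rfl
    exact and_iff_left (by simpa using descSet_subset_Icc_pred u)
  simp_rw [hppoly, mul_sum]
  rw [← sum_fiberwise_of_maps_to (g := fun u : Perm (Fin (r + 1)) => (u 0 : ℕ))
    fun u _ => mem_range.mpr (u 0).isLt]
  refine sum_congr rfl fun i _ => sum_congr rfl fun u hu => ?_
  rw [(mem_filter.mp hu).2]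

section Counting

variable (hrn : r < n)

def admissibleSets (j : Fin (r + 1)) : Finset (Finset (Fin n)) :=
  (univ.powersetCard (r + 1)).filter (Iic (Fin.castLE hrn j) ⊆ ·)

variable {hrn}

theorem mem_admissibleSets {j : Fin (r + 1)} {S : Finset (Fin n)} :
    S ∈ admissibleSets hrn j ↔ #S = r + 1 ∧ Iic (Fin.castLE hrn j) ⊆ S := by
  simp [admissibleSets]

theorem card_admissibleSets (j : Fin (r + 1)) :
    #(admissibleSets hrn j) = (n - (j + 1)).choose (r - j) := by
  rw [admissibleSets, card_filter_powersetCard_subset _ _ _ (subset_univ _)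
    (by simp only [Fin.card_Iic, Fin.val_castLE]; omega),
    card_univ, Fintype.card_fin, Fin.card_Iic, Fin.val_castLE]
  congr 1
  omega

end Counting

theorem apoly_Icc_eq_sum_sigma (hrn : r < n) :
    Apoly n (Icc 1 r) = ∑ x ∈ univ.sigma fun u : Perm (Fin (r + 1)) =>
      admissibleSets hrn (u (Fin.last r)), X ^ #(descSet x.1) := by
  refine sum_bij' (fun w _ => ⟨prefixPattern hrn w, prefixValues hrn w⟩)
    (fun x hx => ofPrefix hrn x.1 x.2 (mem_admissibleSets.mp (mem_sigma.mp hx).2).1)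
    (fun w hw => ?_) (fun x hx => ?_) (fun w hw => ?_) (fun x hx => ?_) (fun w hw => ?_)
  · have hw := (mem_filter.mp hw).2
    exact mem_sigma.mpr ⟨mem_univ _, mem_admissibleSets.mpr
      ⟨card_prefixValues hrn w, Iic_subset_prefixValues hw⟩⟩
  · have hIic := (mem_admissibleSets.mp (mem_sigma.mp hx).2).2
    simpa [descSet_ofPrefix hIic] using descSet_subset_Icc_pred x.1
  · exact ofPrefix_prefixPattern (mem_filter.mp hw).2
  · obtain ⟨u, S⟩ := x
    exact Sigma.ext (prefixPattern_ofPrefix u S _) (heq_of_eq (prefixValues_ofPrefix u S _))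
  · have hw := (mem_filter.mp hw).2
    rw [← descSet_ofPrefix (hS := card_prefixValues hrn w) (Iic_subset_prefixValues hw),
      ofPrefix_prefixPattern hw]

/-- For `0 ≤ r ≤ n-1` and `T = [r] = {1,…,r} ⊆ [n-1]`,
`A^T_n(x) = Σ_{i=0}^r binom(n-r+i-1, i)·p_{r,i}(x)`, where
`p_{r,i}(x) = Σ x^{des(w)}` over all `w ∈ S_{r+1}` with `w(1) = i+1`
(no descent restriction, i.e. `Des(w) ⊆ [r]`). -/
theorem stmt9 (n r : ℕ) (hn : 0 < n) (hr : r ≤ n - 1) :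
    Apoly n (Finset.Icc 1 r) =
      ∑ i ∈ Finset.range (r + 1),
        C (((n - r + i - 1).choose i : ℝ)) * ppoly r i (Finset.Icc 1 r) := by
  have hrn : r < n := by omega
  rw [sum_C_mul_ppoly_Icc, apoly_Icc_eq_sum_sigma hrn, sum_sigma]
  simp_rw [sum_const, card_admissibleSets, nsmul_eq_mul, ← map_natCast C]
  refine (sum_apply_last_eq_sum_rev_apply_zero
    (fun j d => C (((n - (j + 1)).choose (r - j) : ℕ) : ℝ) * X ^ d)).trans
    (sum_congr rfl fun u _ => ?_)
  have := (u 0).isLt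
  simp only [Fin.val_rev]
  congr 4 <;> omega
end
end

section
/- For every n ≥ 2, Σ_{w ∈ D_n} x^{des(w)} = 2 · E_{n,n-1}(x) + (1 − x) · E_{n-1,n-1}(x), where E_{m,r}(x) = Σ_{w ∈ [r]^m} x^{des(w)}. -/
open Polynomial

open scoped Classical

noncomputable section

/-- The descent set of a word `w ∈ [r]^n` (encoded as `w : Fin n → Fin r`), as a subset
of `{1,…,n-1}` (1-based): `i` is a descent iff `w(i) ≥ w(i+1)`. -/
def descSetW {n r : ℕ} (w : Fin n → Fin r) : Finset ℕ :=
  (Finset.univ.filter (fun i : Fin (n - 1) =>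
      w ⟨i.val + 1, by have := i.isLt; omega⟩ ≤ w ⟨i.val, by have := i.isLt; omega⟩)).image
    (fun i => i.val + 1)

/-- `E_{n,r}(x) = Σ_{w ∈ [r]^n} x^{des(w)}`. -/
def Epoly (n r : ℕ) : Polynomial ℝ :=
  ∑ w : Fin n → Fin r, X ^ (descSetW w).card

/-- The set `D_{n,k}` of words `w ∈ ℤ^k` such that `(|w(1)|, w(2), …, w(k)) ∈ [n-1]^k`. -/
def Dword (n k : ℕ) : Finset (Fin k → ℤ) :=
  (Fintype.piFinset (fun _ : Fin k => Finset.Icc (-(n : ℤ)) (n : ℤ))).filter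
    (fun w => ∀ i : Fin k,
      (i.val = 0 → 1 ≤ |w i| ∧ |w i| ≤ (n : ℤ) - 1) ∧
      (i.val ≠ 0 → 1 ≤ w i ∧ w i ≤ (n : ℤ) - 1))

/-- The descent set of a word `w ∈ D_{n,k} ⊆ ℤ^k`, as a subset of `{1,…,k-1}`
(1-based): `i` is a descent iff `|w(i)| > w(i+1)`, or `w(i) = w(i+1) > 0`. -/
def descSetD {k : ℕ} (w : Fin k → ℤ) : Finset ℕ :=
  (Finset.univ.filter (fun i : Fin (k - 1) =>
      w ⟨i.val + 1, by have := i.isLt; omega⟩ < |w ⟨i.val, by have := i.isLt; omega⟩| ∨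
        (w ⟨i.val, by have := i.isLt; omega⟩ = w ⟨i.val + 1, by have := i.isLt; omega⟩ ∧
          0 < w ⟨i.val + 1, by have := i.isLt; omega⟩))).image (fun i => i.val + 1)


namespace Stmt18Aux

def lo {k : ℕ} (i : Fin (k - 1)) : Fin k := ⟨i.val, by have := i.isLt; omega⟩
def hi {k : ℕ} (i : Fin (k - 1)) : Fin k := ⟨i.val + 1, by have := i.isLt; omega⟩

lemma descSetW_card {n r : ℕ} (v : Fin n → Fin r) :
    (descSetW v).card
      = (Finset.univ.filter (fun i : Fin (n - 1) => v (hi i) ≤ v (lo i))).card := by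
  have hinj : Function.Injective (fun i : Fin (n - 1) => i.val + 1) := by
    intro a b h; exact Fin.ext (by simpa using h)
  exact Finset.card_image_of_injective _ hinj

lemma descSetD_card {k : ℕ} (w : Fin k → ℤ) :
    (descSetD w).card
      = (Finset.univ.filter (fun i : Fin (k - 1) =>
          w (hi i) < |w (lo i)| ∨ (w (lo i) = w (hi i) ∧ 0 < w (hi i)))).card := by
  have hinj : Function.Injective (fun i : Fin (k - 1) => i.val + 1) := by
    intro a b h; exact Fin.ext (by simpa using h)
  exact Finset.card_image_of_injective _ hinj

/-- descent count with a *strict* descent condition at the first position. -/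
def dT {n r : ℕ} (v : Fin n → Fin r) : ℕ :=
  (Finset.univ.filter (fun i : Fin (n - 1) =>
    v (hi i) < v (lo i) ∨ (v (hi i) ≤ v (lo i) ∧ i.val ≠ 0))).card

/-- Card of a filter over `Fin t` as a filter over `range t`. -/
lemma card_filter_fin (t : ℕ) (p : Fin t → Prop) [DecidablePred p] (P : ℕ → Prop)
    [DecidablePred P] (h : ∀ i : Fin t, p i ↔ P i.val) :
    (Finset.univ.filter p).card = ((Finset.range t).filter P).card := by
  refine Finset.card_bij' (fun (a : Fin t) _ => a.val)
    (fun (b : ℕ) hb => (⟨b, by simpa using (Finset.mem_filter.mp hb).1⟩ : Fin t)) ?_ ?_ ?_ ?_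
  · intro a ha
    simp only [Finset.mem_filter, Finset.mem_range] at ha ⊢
    exact ⟨a.isLt, (h a).mp ha.2⟩
  · intro b hb
    simp only [Finset.mem_filter, Finset.mem_range, Finset.mem_univ, true_and] at hb ⊢
    exact (h _).mpr hb.2
  · intro a _; rfl
  · intro b _; rfl

/-- the values of `v`, extended to `ℕ`. -/
def W {n r : ℕ} (v : Fin n → Fin r) (m : ℕ) : ℕ :=
  if h : m < n then (v ⟨m, h⟩ : ℕ) else 0

lemma W_eq {n r : ℕ} (v : Fin n → Fin r) (m : ℕ) (h : m < n) :
    W v m = (v ⟨m, h⟩ : ℕ) := dif_pos h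

/-- the values of `w`, extended to `ℕ`. -/
def Wz {k : ℕ} (w : Fin k → ℤ) (m : ℕ) : ℤ :=
  if h : m < k then w ⟨m, h⟩ else 0

lemma Wz_eq {k : ℕ} (w : Fin k → ℤ) (m : ℕ) (h : m < k) :
    Wz w m = w ⟨m, h⟩ := dif_pos h

lemma descSetW_card_nat {n r : ℕ} (v : Fin n → Fin r) :
    (descSetW v).card
      = ((Finset.range (n - 1)).filter (fun m => W v (m + 1) ≤ W v m)).card := by
  rw [descSetW_card]
  apply card_filter_fin
  intro i
  have h1 : i.val + 1 < n := by have := i.isLt; omega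
  have h2 : i.val < n := by omega
  rw [W_eq v _ h1, W_eq v _ h2]
  exact Fin.le_def

lemma dT_card_nat {n r : ℕ} (v : Fin n → Fin r) :
    dT v = ((Finset.range (n - 1)).filter
      (fun m => W v (m + 1) < W v m ∨ (W v (m + 1) ≤ W v m ∧ m ≠ 0))).card := by
  rw [dT]
  apply card_filter_fin
  intro i
  have h1 : i.val + 1 < n := by have := i.isLt; omega
  have h2 : i.val < n := by omega
  rw [W_eq v _ h1, W_eq v _ h2]
  rw [Fin.lt_def, Fin.le_def]
  exact Iff.rfl

lemma descSetD_card_nat {k : ℕ} (w : Fin k → ℤ) :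
    (descSetD w).card
      = ((Finset.range (k - 1)).filter
          (fun m => Wz w (m + 1) < |Wz w m| ∨ (Wz w m = Wz w (m + 1) ∧ 0 < Wz w (m + 1)))).card := by
  rw [descSetD_card]
  apply card_filter_fin
  intro i
  have h1 : i.val + 1 < k := by have := i.isLt; omega
  have h2 : i.val < k := by omega
  rw [Wz_eq w _ h1, Wz_eq w _ h2]
  exact Iff.rfl

/-- shifting the index in a filtered count. -/
lemma shift_card (a : ℕ) (Q : ℕ → Prop) [DecidablePred Q] :
    ((Finset.range (a + 1)).filter (fun m => Q m ∧ m ≠ 0)).card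
      = ((Finset.range a).filter (fun m => Q (m + 1))).card := by
  refine Finset.card_bij' (fun (m : ℕ) _ => m - 1) (fun (m : ℕ) _ => m + 1) ?_ ?_ ?_ ?_
  · intro m hm
    simp only [Finset.mem_filter, Finset.mem_range] at hm ⊢
    refine ⟨by omega, ?_⟩
    rw [Nat.sub_add_cancel (by omega)]
    exact hm.2.1
  · intro m hm
    simp only [Finset.mem_filter, Finset.mem_range] at hm ⊢
    exact ⟨by omega, hm.2, by omega⟩
  · intro m hm
    simp only [Finset.mem_filter, Finset.mem_range] at hm
    show m - 1 + 1 = m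
    omega
  · intro m _
    show m + 1 - 1 = m
    omega

lemma key (n r : ℕ) (hn : 2 ≤ n) :
    ∑ v : Fin n → Fin r, (X : Polynomial ℝ) ^ dT v
      = Epoly n r + (1 - X) * Epoly (n - 1) r := by
  classical
  -- the two parts, by whether the first two letters agree
  have hne : ∀ v : Fin n → Fin r, ¬ W v 1 = W v 0 → (descSetW v).card = dT v := by
    intro v hv
    rw [descSetW_card_nat, dT_card_nat]
    congr 1
    apply Finset.filter_congr
    intro m _
    by_cases h0 : m = 0
    · subst h0
      simp only [Nat.zero_add]
      omega
    · omega
  have heq : ∀ v : Fin n → Fin r, W v 1 = W v 0 → (descSetW v).card = dT v + 1 := by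
    intro v hv
    rw [descSetW_card_nat, dT_card_nat]
    have hins : (Finset.range (n - 1)).filter (fun m => W v (m + 1) ≤ W v m)
        = insert 0 ((Finset.range (n - 1)).filter
            (fun m => W v (m + 1) < W v m ∨ (W v (m + 1) ≤ W v m ∧ m ≠ 0))) := by
      ext m
      simp only [Finset.mem_insert, Finset.mem_filter, Finset.mem_range]
      constructor
      · rintro ⟨hm, hle⟩
        by_cases h0 : m = 0
        · exact Or.inl h0
        · exact Or.inr ⟨hm, Or.inr ⟨hle, h0⟩⟩
      · rintro (rfl | ⟨hm, hQT⟩)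
        · refine ⟨by omega, ?_⟩
          simp only [Nat.zero_add]
          omega
        · exact ⟨hm, by omega⟩
    rw [hins, Finset.card_insert_of_notMem]
    simp only [Finset.mem_filter, Finset.mem_range]
    rintro ⟨-, hQT⟩
    simp only [Nat.zero_add] at hQT
    omega
  -- the equal-first-two-letters part is in bijection with shorter words
  have hC : ∑ v ∈ Finset.univ.filter (fun v : Fin n → Fin r => W v 1 = W v 0),
      (X : Polynomial ℝ) ^ dT v = Epoly (n - 1) r := by
    unfold Epoly
    refine Finset.sum_nbij' (fun v => fun j : Fin (n - 1) => v (hi j))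
      (fun u => fun j : Fin n => u ⟨j.val - 1, by have := j.isLt; omega⟩) ?_ ?_ ?_ ?_ ?_
    · intro v _; exact Finset.mem_univ _
    · intro u _
      simp only [Finset.mem_filter, Finset.mem_univ, true_and]
      rw [W_eq _ 1 (by omega), W_eq _ 0 (by omega)]
      rfl
    · intro v hv'
      have hv : W v 1 = W v 0 := (Finset.mem_filter.mp hv').2
      rw [W_eq v 1 (by omega), W_eq v 0 (by omega)] at hv
      have hv01 : v ⟨1, by omega⟩ = v ⟨0, by omega⟩ := Fin.val_injective hv
      funext j
      simp only []
      by_cases hj0 : j.val = 0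
      · rw [show j = (⟨0, by omega⟩ : Fin n) from Fin.ext hj0]
        exact hv01
      · congr 1
        apply Fin.ext
        show j.val - 1 + 1 = j.val
        omega
    · intro u _
      funext j
      simp only []
      congr 1
    · intro v hv'
      have hv : W v 1 = W v 0 := (Finset.mem_filter.mp hv').2
      congr 1
      rw [dT_card_nat, descSetW_card_nat]
      have hWf : ∀ m, m < n - 1 →
          W (fun j : Fin (n - 1) => v (hi j)) m = W v (m + 1) := by
        intro m hm
        rw [W_eq _ m hm, W_eq v (m + 1) (by have := hm; omega)]
        rfl
      have e1 : (Finset.range (n - 1)).filter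
            (fun m => W v (m + 1) < W v m ∨ (W v (m + 1) ≤ W v m ∧ m ≠ 0))
          = (Finset.range (n - 1)).filter (fun m => W v (m + 1) ≤ W v m ∧ m ≠ 0) := by
        apply Finset.filter_congr
        intro m _
        by_cases h0 : m = 0
        · subst h0
          simp only [Nat.zero_add]
          omega
        · omega
      have e2 := shift_card (n - 1 - 1) (fun m => W v (m + 1) ≤ W v m)
      rw [show n - 1 - 1 + 1 = n - 1 from by omega] at e2
      rw [e1, e2]
      congr 1
      apply Finset.filter_congr
      intro m hm
      simp only [Finset.mem_range] at hm
      rw [hWf (m + 1) (by omega), hWf m (by omega)]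
  -- assemble
  have h1 := Finset.sum_filter_add_sum_filter_not (Finset.univ : Finset (Fin n → Fin r))
    (fun v => W v 1 = W v 0) (fun v => (X : Polynomial ℝ) ^ dT v)
  have h2 := Finset.sum_filter_add_sum_filter_not (Finset.univ : Finset (Fin n → Fin r))
    (fun v => W v 1 = W v 0) (fun v => (X : Polynomial ℝ) ^ (descSetW v).card)
  have hA : ∑ v ∈ Finset.univ.filter (fun v : Fin n → Fin r => ¬ W v 1 = W v 0),
      (X : Polynomial ℝ) ^ (descSetW v).card
      = ∑ v ∈ Finset.univ.filter (fun v : Fin n → Fin r => ¬ W v 1 = W v 0),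
        (X : Polynomial ℝ) ^ dT v := by
    apply Finset.sum_congr rfl
    intro v hv
    rw [hne v (Finset.mem_filter.mp hv).2]
  have hB : ∑ v ∈ Finset.univ.filter (fun v : Fin n → Fin r => W v 1 = W v 0),
      (X : Polynomial ℝ) ^ (descSetW v).card
      = X * ∑ v ∈ Finset.univ.filter (fun v : Fin n → Fin r => W v 1 = W v 0),
        (X : Polynomial ℝ) ^ dT v := by
    rw [Finset.mul_sum]
    apply Finset.sum_congr rfl
    intro v hv
    rw [heq v (Finset.mem_filter.mp hv).2]
    ring
  have hE : Epoly n r = ∑ v : Fin n → Fin r, (X : Polynomial ℝ) ^ (descSetW v).card := rfl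
  rw [hE, ← h2, ← h1, hA, hB, hC]
  ring

lemma mem_Dword_bounds {n : ℕ} (hn : 2 ≤ n) {w : Fin n → ℤ} (hw : w ∈ Dword n n) :
    ∀ j : Fin n, (1 ≤ |w j| ∧ |w j| ≤ (n : ℤ) - 1) ∧ (j.val ≠ 0 → 1 ≤ w j) := by
  simp only [Dword, Finset.mem_filter, Fintype.mem_piFinset, Finset.mem_Icc] at hw
  intro j
  obtain ⟨hA, hB⟩ := hw.2 j
  by_cases h0 : j.val = 0
  · exact ⟨hA h0, fun h => absurd h0 h⟩
  · obtain ⟨hb1, hb2⟩ := hB h0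
    have habs : |w j| = w j := abs_of_pos (by omega)
    exact ⟨⟨by rw [habs]; exact hb1, by rw [habs]; exact hb2⟩, fun _ => hb1⟩

def toV {n : ℕ} (hn : 2 ≤ n) (w : Fin n → ℤ) (j : Fin n) : Fin (n - 1) :=
  ⟨((|w j|).toNat - 1) % (n - 1), Nat.mod_lt _ (by omega)⟩

lemma toV_val {n : ℕ} (hn : 2 ≤ n) (w : Fin n → ℤ) (j : Fin n) :
    (toV hn w j : ℕ) = ((|w j|).toNat - 1) % (n - 1) := rfl

lemma W_toV {n : ℕ} (hn : 2 ≤ n) (w : Fin n → ℤ) (m : ℕ) (h : m < n) :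
    W (toV hn w) m = ((|Wz w m|).toNat - 1) % (n - 1) := by
  rw [W_eq _ m h, Wz_eq w m h]
  rfl

def fromV {n : ℕ} (v : Fin n → Fin (n - 1)) (j : Fin n) : ℤ := (v j : ℕ) + 1

def fromVN {n : ℕ} (v : Fin n → Fin (n - 1)) (j : Fin n) : ℤ :=
  if j.val = 0 then -((v j : ℕ) + 1) else (v j : ℕ) + 1

lemma pos_part (n : ℕ) (hn : 2 ≤ n) :
    ∑ w ∈ (Dword n n).filter (fun w => 0 < w ⟨0, by omega⟩),
        (X : Polynomial ℝ) ^ (descSetD w).card = Epoly n (n - 1) := by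
  classical
  have hb : ∀ w ∈ (Dword n n).filter (fun w => 0 < w ⟨0, by omega⟩),
      ∀ j : Fin n, 1 ≤ w j ∧ w j ≤ (n : ℤ) - 1 := by
    intro w hw j
    obtain ⟨hw1, hw2⟩ := Finset.mem_filter.mp hw
    obtain ⟨⟨ha1, ha2⟩, hbp⟩ := mem_Dword_bounds hn hw1 j
    by_cases h0 : j.val = 0
    · have hj : j = (⟨0, by omega⟩ : Fin n) := Fin.ext h0
      rw [hj] at ha1 ha2 ⊢
      rw [abs_of_pos hw2] at ha1 ha2
      exact ⟨ha1, ha2⟩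
    · have h1 := hbp h0
      refine ⟨h1, ?_⟩
      rwa [abs_of_pos (by omega)] at ha2
  unfold Epoly
  refine Finset.sum_nbij' (fun w => toV hn w) (fun v => fromV v) ?_ ?_ ?_ ?_ ?_
  · intro w _; exact Finset.mem_univ _
  · intro v _
    simp only [Finset.mem_filter]
    constructor
    · simp only [Dword, Finset.mem_filter, Fintype.mem_piFinset, Finset.mem_Icc]
      refine ⟨fun i => ?_, fun i => ⟨fun _ => ?_, fun _ => ?_⟩⟩
      · have hlt := (v i).isLt
        simp only [fromV]
        omega
      · have hlt := (v i).isLt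
        simp only [fromV]
        rw [abs_of_pos (by positivity)]
        omega
      · have hlt := (v i).isLt
        simp only [fromV]
        omega
    · simp only [fromV]
      positivity
  · intro w hw
    have hbw := hb w hw
    funext j
    obtain ⟨h1, h2⟩ := hbw j
    show fromV (toV hn w) j = w j
    rw [fromV, toV_val]
    rw [abs_of_pos (by omega), Nat.mod_eq_of_lt (by omega)]
    omega
  · intro v _
    funext j
    show toV hn (fromV v) j = v j
    apply Fin.ext
    rw [toV_val]
    have hlt := (v j).isLt
    rw [show |fromV v j| = ((v j : ℕ) : ℤ) + 1 from by rw [fromV]; rw [abs_of_pos (by positivity)]]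
    rw [show (((v j : ℕ) : ℤ) + 1).toNat = (v j : ℕ) + 1 from by omega]
    rw [Nat.mod_eq_of_lt (by omega)]
    omega
  · intro w hw
    have hbw := hb w hw
    congr 1
    rw [descSetD_card_nat, descSetW_card_nat]
    congr 1
    apply Finset.filter_congr
    intro m hm
    simp only [Finset.mem_range] at hm
    have hm1 : m + 1 < n := by omega
    have hm0 : m < n := by omega
    have hbm : 1 ≤ Wz w m ∧ Wz w m ≤ (n : ℤ) - 1 := by
      rw [Wz_eq w m hm0]; exact hbw ⟨m, hm0⟩
    have hbm1 : 1 ≤ Wz w (m + 1) ∧ Wz w (m + 1) ≤ (n : ℤ) - 1 := by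
      rw [Wz_eq w (m + 1) hm1]; exact hbw ⟨m + 1, hm1⟩
    rw [W_toV hn w m hm0, W_toV hn w (m + 1) hm1]
    rw [abs_of_pos (by omega : (0:ℤ) < Wz w m), abs_of_pos (by omega : (0:ℤ) < Wz w (m + 1))]
    rw [Nat.mod_eq_of_lt (by omega), Nat.mod_eq_of_lt (by omega)]
    omega

lemma neg_part (n : ℕ) (hn : 2 ≤ n) :
    ∑ w ∈ (Dword n n).filter (fun w => w ⟨0, by omega⟩ < 0),
        (X : Polynomial ℝ) ^ (descSetD w).card
      = ∑ v : Fin n → Fin (n - 1), (X : Polynomial ℝ) ^ dT v := by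
  classical
  refine Finset.sum_nbij' (fun w => toV hn w) (fun v => fromVN v) ?_ ?_ ?_ ?_ ?_
  · intro w _; exact Finset.mem_univ _
  · intro v _
    simp only [Finset.mem_filter]
    constructor
    · simp only [Dword, Finset.mem_filter, Fintype.mem_piFinset, Finset.mem_Icc]
      refine ⟨fun i => ?_, fun i => ⟨fun h0 => ?_, fun h0 => ?_⟩⟩
      · have hlt := (v i).isLt
        rw [fromVN]
        split_ifs <;> omega
      · have hlt := (v i).isLt
        rw [fromVN, if_pos h0, abs_neg, abs_of_pos (by positivity)]
        omega
      · have hlt := (v i).isLt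
        rw [fromVN, if_neg h0]
        omega
    · rw [fromVN, if_pos rfl]
      have hlt := (v ⟨0, by omega⟩).isLt
      omega
  · intro w hw
    obtain ⟨hw1, hw2⟩ := Finset.mem_filter.mp hw
    funext j
    show fromVN (toV hn w) j = w j
    obtain ⟨⟨ha1, ha2⟩, hbp⟩ := mem_Dword_bounds hn hw1 j
    by_cases hj0 : j.val = 0
    · have hj : j = (⟨0, by omega⟩ : Fin n) := Fin.ext hj0
      have hneg : w j < 0 := by rw [hj]; exact hw2
      rw [fromVN, if_pos hj0, toV_val]
      rw [abs_of_neg hneg] at ha1 ha2 ⊢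
      rw [Nat.mod_eq_of_lt (by omega)]
      omega
    · have h1 := hbp hj0
      rw [fromVN, if_neg hj0, toV_val]
      rw [abs_of_pos (by omega)] at ha2 ⊢
      rw [Nat.mod_eq_of_lt (by omega)]
      omega
  · intro v _
    funext j
    show toV hn (fromVN v) j = v j
    apply Fin.ext
    rw [toV_val]
    have hlt := (v j).isLt
    have habs : |fromVN v j| = ((v j : ℕ) : ℤ) + 1 := by
      rw [fromVN]
      split_ifs
      · rw [abs_neg, abs_of_pos (by positivity)]
      · rw [abs_of_pos (by positivity)]
    rw [habs]
    rw [show (((v j : ℕ) : ℤ) + 1).toNat = (v j : ℕ) + 1 from by omega]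
    rw [Nat.mod_eq_of_lt (by omega)]
    omega
  · intro w hw
    obtain ⟨hw1, hw2⟩ := Finset.mem_filter.mp hw
    congr 1
    rw [descSetD_card_nat, dT_card_nat]
    congr 1
    apply Finset.filter_congr
    intro m hm
    simp only [Finset.mem_range] at hm
    have hm1 : m + 1 < n := by omega
    have hm0 : m < n := by omega
    have hb1 : 1 ≤ Wz w (m + 1) ∧ Wz w (m + 1) ≤ (n : ℤ) - 1 := by
      rw [Wz_eq w (m + 1) hm1]
      obtain ⟨⟨ha1, ha2⟩, hbp⟩ := mem_Dword_bounds hn hw1 ⟨m + 1, hm1⟩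
      have h1 := hbp (by simp)
      refine ⟨h1, ?_⟩
      rwa [abs_of_pos (by omega)] at ha2
    rw [W_toV hn w m hm0, W_toV hn w (m + 1) hm1]
    rw [abs_of_pos (by omega : (0:ℤ) < Wz w (m + 1))]
    by_cases hm0' : m = 0
    · subst hm0'
      have h0' : Wz w 0 < 0 := by rw [Wz_eq w 0 (by omega)]; exact hw2
      have habs0 : 1 ≤ |Wz w 0| ∧ |Wz w 0| ≤ (n : ℤ) - 1 := by
        rw [Wz_eq w 0 (by omega)]
        exact (mem_Dword_bounds hn hw1 ⟨0, by omega⟩).1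
      rw [abs_of_neg h0'] at habs0 ⊢
      rw [Nat.mod_eq_of_lt (by omega), Nat.mod_eq_of_lt (by omega)]
      omega
    · have hbm : 1 ≤ Wz w m ∧ Wz w m ≤ (n : ℤ) - 1 := by
        rw [Wz_eq w m hm0]
        obtain ⟨⟨ha1, ha2⟩, hbp⟩ := mem_Dword_bounds hn hw1 ⟨m, hm0⟩
        have h1 := hbp hm0'
        refine ⟨h1, ?_⟩
        rwa [abs_of_pos (by omega)] at ha2
      rw [abs_of_pos (by omega : (0:ℤ) < Wz w m)]
      rw [Nat.mod_eq_of_lt (by omega), Nat.mod_eq_of_lt (by omega)]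
      omega

end Stmt18Aux

/-- For every `n ≥ 2`,
`Σ_{w ∈ D_n} x^{des(w)} = 2·E_{n,n-1}(x) + (1-x)·E_{n-1,n-1}(x)`. -/
theorem stmt18 (n : ℕ) (hn : 2 ≤ n) :
    (∑ w ∈ Dword n n, X ^ (descSetD w).card) =
      2 * Epoly n (n - 1) + (1 - X) * Epoly (n - 1) (n - 1) := by
  classical
  have h2 : (0:ℕ) < n := by omega
  have hsplit := Finset.sum_filter_add_sum_filter_not (Dword n n)
    (fun w => 0 < w ⟨0, by omega⟩) (fun w => (X : Polynomial ℝ) ^ (descSetD w).card)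
  have hneg : (Dword n n).filter (fun w => ¬ 0 < w ⟨0, by omega⟩)
      = (Dword n n).filter (fun w => w ⟨0, by omega⟩ < 0) := by
    apply Finset.filter_congr
    intro w hw
    have := (Stmt18Aux.mem_Dword_bounds hn hw ⟨0, by omega⟩).1.1
    constructor
    · intro h; simp only [not_lt] at h
      have hne : w ⟨0, by omega⟩ ≠ 0 := by
        intro h0; rw [h0] at this; simp at this
      exact lt_of_le_of_ne h hne
    · intro h; simp; omega
  rw [← hsplit, hneg, Stmt18Aux.pos_part n hn, Stmt18Aux.neg_part n hn,
    Stmt18Aux.key n (n-1) hn]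
  ring
end
end
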